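/- arXiv:math/9407203 — 12 statements merged into one kernel-verified Lean document; each statement's English description precedes it below -/
import Mathlib

section
/- For every dominating family D ⊆ ω^ω there is a splitting family of the same cardinality; consequently the splitting number 𝔰 is at most the dominating number 𝔡. -/
/-!
Given an infinite `Y`, let `g n` be an element of `Y` above `n`, and pick `f` in the dominating
family with `g ≤* f`. Cut `ℕ` into the intervals `[aₖ, aₖ₊₁)` with `a₀ = 0` and
`aₖ₊₁ = aₖ + f aₖ + 1`. For large `k` the element `g aₖ` of `Y` lies in the `k`-th interval, so
the union of the even-indexed intervals splits `Y`. Hence `f ↦ ⋃ₖ [a₂ₖ, a₂ₖ₊₁)` maps every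
dominating family onto a splitting family.
-/

open Cardinal

/-- `f ≤* g`: eventual domination. -/
def EvDom (f g : ℕ → ℕ) : Prop := ∀ᶠ n in Filter.atTop, f n ≤ g n

/-- `D` is a dominating family. -/
def Dominating (D : Set (ℕ → ℕ)) : Prop := ∀ g : ℕ → ℕ, ∃ f ∈ D, EvDom g f

/-- `X` splits the infinite set `Y`. -/
def Splits (X Y : Set ℕ) : Prop := (Y ∩ X).Infinite ∧ (Y \ X).Infinite

/-- `S` is a splitting family. -/
def SplittingFam (S : Set (Set ℕ)) : Prop :=
  ∀ Y : Set ℕ, Y.Infinite → ∃ X ∈ S, Splits X Y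

/-- The dominating number 𝔡. -/
noncomputable def domNumber : Cardinal :=
  sInf { c | ∃ D : Set (ℕ → ℕ), Dominating D ∧ c = #D }

/-- The splitting number 𝔰. -/
noncomputable def splitNumber : Cardinal :=
  sInf { c | ∃ S : Set (Set ℕ), SplittingFam S ∧ c = #S }

open Filter

def evenBlocks (a : ℕ → ℕ) : Set ℕ := {n | ∃ k, a (2 * k) ≤ n ∧ n < a (2 * k + 1)}

section evenBlocks

variable {a : ℕ → ℕ}

theorem mem_evenBlocks_iff_even (ha : StrictMono a) {k n : ℕ} (hk : a k ≤ n)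
    (hn : n < a (k + 1)) : n ∈ evenBlocks a ↔ Even k := by
  constructor
  · rintro ⟨j, hj, hjn⟩
    have hk_lt : k < 2 * j + 1 := ha.lt_iff_lt.mp (hk.trans_lt hjn)
    have hj_lt : 2 * j < k + 1 := ha.lt_iff_lt.mp (hj.trans_lt hn)
    exact ⟨j, by omega⟩
  · rintro ⟨j, rfl⟩
    exact ⟨j, by rwa [two_mul], by rwa [two_mul]⟩

theorem infinite_of_frequently_block (ha : StrictMono a) {Y : Set ℕ}
    (hY : ∀ᶠ k in atTop, ∃ n ∈ Y, a k ≤ n ∧ n < a (k + 1)) {P : ℕ → Prop}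
    (hP : ∃ᶠ k in atTop, P k) :
    {n | n ∈ Y ∧ ∃ k, P k ∧ a k ≤ n ∧ n < a (k + 1)}.Infinite := by
  refine Nat.frequently_atTop_iff_infinite.mp (frequently_atTop.mpr fun m => ?_)
  obtain ⟨k, hmk, hPk, n, hnY, hkn, hnk⟩ := frequently_atTop.mp (hP.and_eventually hY) m
  exact ⟨n, hmk.trans (ha.le_apply.trans hkn), hnY, k, hPk, hkn, hnk⟩

theorem splits_evenBlocks (ha : StrictMono a) {Y : Set ℕ}
    (hY : ∀ᶠ k in atTop, ∃ n ∈ Y, a k ≤ n ∧ n < a (k + 1)) : Splits (evenBlocks a) Y := by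
  constructor
  · refine (infinite_of_frequently_block ha hY Nat.frequently_even).mono ?_
    rintro n ⟨hnY, k, hk, hkn, hnk⟩
    exact ⟨hnY, (mem_evenBlocks_iff_even ha hkn hnk).mpr hk⟩
  · refine (infinite_of_frequently_block ha hY
      (Nat.frequently_odd.mono fun _ => Nat.not_even_iff_odd.mpr)).mono ?_
    rintro n ⟨hnY, k, hk, hkn, hnk⟩
    exact ⟨hnY, (mem_evenBlocks_iff_even ha hkn hnk).not.mpr hk⟩

end evenBlocks

def blockSeq (f : ℕ → ℕ) : ℕ → ℕ
  | 0 => 0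
  | k + 1 => blockSeq f k + f (blockSeq f k) + 1

theorem blockSeq_strictMono (f : ℕ → ℕ) : StrictMono (blockSeq f) :=
  strictMono_nat_of_lt_succ fun k => by simp only [blockSeq]; omega

theorem eventually_mem_block_of_evDom {f g : ℕ → ℕ} (hg : ∀ n, n < g n) (hgf : EvDom g f) :
    ∀ᶠ k in atTop, blockSeq f k ≤ g (blockSeq f k) ∧ g (blockSeq f k) < blockSeq f (k + 1) :=
  ((blockSeq_strictMono f).tendsto_atTop.eventually hgf).mono fun k hk => by
    simp only [blockSeq]
    exact ⟨(hg _).le, by omega⟩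

theorem splittingFam_image_of_dominating {D : Set (ℕ → ℕ)} (hD : Dominating D) :
    SplittingFam ((fun f => evenBlocks (blockSeq f)) '' D) := by
  intro Y hY
  choose g hgY hg using fun n => hY.exists_gt n
  obtain ⟨f, hfD, hgf⟩ := hD g
  refine ⟨_, Set.mem_image_of_mem _ hfD, splits_evenBlocks (blockSeq_strictMono f) ?_⟩
  exact (eventually_mem_block_of_evDom hg hgf).mono fun k hk => ⟨_, hgY _, hk⟩

theorem exists_dominating_mk_eq_domNumber : ∃ D : Set (ℕ → ℕ), Dominating D ∧ #D = domNumber := by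
  have hne : {c | ∃ D : Set (ℕ → ℕ), Dominating D ∧ c = #D}.Nonempty :=
    ⟨_, Set.univ, fun g => ⟨g, Set.mem_univ g, .of_forall fun _ => le_rfl⟩, rfl⟩
  obtain ⟨D, hD, hDc⟩ := csInf_mem hne
  exact ⟨D, hD, hDc.symm⟩

/-- For every dominating family there is a splitting family of the same (or smaller)
cardinality; consequently 𝔰 ≤ 𝔡. -/
theorem stmt0 :
    (∀ D : Set (ℕ → ℕ), Dominating D → ∃ S : Set (Set ℕ), SplittingFam S ∧ #S ≤ #D) ∧
    splitNumber ≤ domNumber := by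
  have main (D : Set (ℕ → ℕ)) (hD : Dominating D) :
      ∃ S : Set (Set ℕ), SplittingFam S ∧ #S ≤ #D :=
    ⟨_, splittingFam_image_of_dominating hD, mk_image_le⟩
  refine ⟨main, ?_⟩
  obtain ⟨D, hD, hDc⟩ := exists_dominating_mk_eq_domNumber
  obtain ⟨S, hS, hSD⟩ := main D hD
  calc splitNumber ≤ #S := csInf_le' ⟨S, hS, rfl⟩
    _ ≤ #D := hSD
    _ = domNumber := hDc
end

section
/- Given f : ℕ → ℕ, define a₀ = 0 and a_{n+1} = 1 + max(aₙ, f(aₙ)), and let X_f be the union of the intervals [a_{2n}, a_{2n+1}). If Y ⊆ ℕ is infinite and the function g sending each n to the least element of Y greater than n satisfies g ≤* f, then X_f splits Y (i.e., Y ∩ X_f and Y \ X_f are both infinite). -/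
/-!
Since `a (k+1) > f (a k)`, once `g ≤ f` holds the next element of `Y` after `a k` falls in the
block `[a k, a (k+1))`. These blocks alternate between `X_f` (even `k`) and its complement
(odd `k`), so `Y` meets both infinitely often.
-/

open Set

section Blocks

variable {a : ℕ → ℕ}

theorem strictMono_of_eq_one_add_max {f : ℕ → ℕ} (haS : ∀ n, a (n + 1) = 1 + max (a n) (f (a n))) :
    StrictMono a :=
  strictMono_nat_of_lt_succ fun n => by rw [haS n]; omega

theorem Ioc_subset_Ico_of_eq_one_add_max {f : ℕ → ℕ}
    (haS : ∀ n, a (n + 1) = 1 + max (a n) (f (a n))) (k : ℕ) :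
    Ioc (a k) (f (a k)) ⊆ Ico (a k) (a (k + 1)) := by
  rintro x ⟨hlo, hhi⟩
  rw [haS k]
  exact ⟨hlo.le, by omega⟩

theorem notMem_iUnion_Ico_even (ha : Monotone a) {x k : ℕ}
    (hx : x ∈ Ico (a (2 * k + 1)) (a (2 * k + 2))) :
    x ∉ ⋃ n, Ico (a (2 * n)) (a (2 * n + 1)) := by
  simp only [mem_iUnion, mem_Ico, not_exists, not_and, not_lt]
  intro n hn
  rcases le_or_gt n k with hnk | hkn
  · exact (ha (by omega : 2 * n + 1 ≤ 2 * k + 1)).trans hx.1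
  · exact absurd ((ha (by omega : 2 * k + 2 ≤ 2 * n)).trans hn) (not_le.2 hx.2)

theorem eventually_next_mem_Ico {f g : ℕ → ℕ} (haS : ∀ n, a (n + 1) = 1 + max (a n) (f (a n)))
    (hg : ∀ n, n < g n) (hgf : ∀ᶠ n in Filter.atTop, g n ≤ f n) :
    ∀ᶠ k in Filter.atTop, g (a k) ∈ Ico (a k) (a (k + 1)) :=
  ((strictMono_of_eq_one_add_max haS).tendsto_atTop.eventually hgf).mono fun k hk =>
    Ioc_subset_Ico_of_eq_one_add_max haS k ⟨hg (a k), hk⟩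

end Blocks

theorem stmt1_general (f : ℕ → ℕ) (a : ℕ → ℕ)
    (haS : ∀ n, a (n + 1) = 1 + max (a n) (f (a n)))
    (X : Set ℕ) (hX : X = ⋃ n : ℕ, Set.Ico (a (2 * n)) (a (2 * n + 1)))
    (Y : Set ℕ)
    (g : ℕ → ℕ)
    (hg : ∀ n, g n ∈ Y ∧ n < g n ∧ ∀ m ∈ Y, n < m → g n ≤ m)
    (hgf : ∀ᶠ n in Filter.atTop, g n ≤ f n) :
    (Y ∩ X).Infinite ∧ (Y \ X).Infinite := by
  have hmono := strictMono_of_eq_one_add_max haS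
  obtain ⟨K, hK⟩ := Filter.eventually_atTop.mp
    (eventually_next_mem_Ico haS (fun n => (hg n).2.1) hgf)
  have hgt (M k : ℕ) (hk : M < k) : M < g (a k) :=
    (hk.trans_le hmono.le_apply).trans (hg (a k)).2.1
  subst hX
  constructor <;> refine Set.infinite_of_forall_exists_gt fun M => ?_
  · let j := max K M + 1
    refine ⟨g (a (2 * j)), ⟨(hg _).1, mem_iUnion.2 ⟨j, hK _ (by omega)⟩⟩, hgt M _ (by omega)⟩
  · let j := max K M + 1
    exact ⟨g (a (2 * j + 1)), ⟨(hg _).1, notMem_iUnion_Ico_even hmono.monotone (hK _ (by omega))⟩,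
      hgt M _ (by omega)⟩

/-- Given `f`, the interval endpoints `a₀ = 0`, `a_{n+1} = 1 + max(aₙ, f(aₙ))`, and
`X_f = ⋃ₙ [a_{2n}, a_{2n+1})`.  If `Y` is infinite and the "next element of `Y`"
function `g` satisfies `g ≤* f`, then `X_f` splits `Y`. -/
theorem stmt1 (f : ℕ → ℕ) (a : ℕ → ℕ)
    (ha0 : a 0 = 0) (haS : ∀ n, a (n + 1) = 1 + max (a n) (f (a n)))
    (X : Set ℕ) (hX : X = ⋃ n : ℕ, Set.Ico (a (2 * n)) (a (2 * n + 1)))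
    (Y : Set ℕ) (hY : Y.Infinite)
    (g : ℕ → ℕ)
    (hg : ∀ n, g n ∈ Y ∧ n < g n ∧ ∀ m ∈ Y, n < m → g n ≤ m)
    (hgf : ∀ᶠ n in Filter.atTop, g n ≤ f n) :
    (Y ∩ X).Infinite ∧ (Y \ X).Infinite :=
  stmt1_general f a haS X hX Y g hg hgf
end

section
/- The bounding number 𝔟 is at most the unsplitting number 𝔯. -/
/-! Given an unsplit family `R`, consider the functions `n ↦ min (Y ∩ (n, ∞))` for `Y ∈ R`.
If a single `g` eventually dominated all of them, iterate `n ↦ n + g n + 1` from `0` to get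
`a₀ < a₁ < ⋯` with `g aₖ < aₖ₊₁`: then every `Y ∈ R` meets almost every interval `(aₖ, aₖ₊₁)`,
so the union of the even-indexed intervals splits every member of `R`. Hence these functions
form an unbounded family of size at most `#R`. -/

open Cardinal

/-- The bounding number 𝔟: least cardinality of an unbounded family in `(ℕ → ℕ, ≤*)`. -/
noncomputable def boundingNumber : Cardinal :=
  sInf { c | ∃ B : Set (ℕ → ℕ),
    (¬ ∃ g : ℕ → ℕ, ∀ f ∈ B, ∀ᶠ n in Filter.atTop, f n ≤ g n) ∧ c = #B }

/-- The unsplitting (reaping) number 𝔯: least cardinality of a family of infinite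
subsets of ℕ not simultaneously split by any single set. -/
noncomputable def unsplittingNumber : Cardinal :=
  sInf { c | ∃ R : Set (Set ℕ),
    (∀ Y ∈ R, Y.Infinite) ∧ (¬ ∃ X : Set ℕ, ∀ Y ∈ R, Splits X Y) ∧ c = #R }

open Filter Set

noncomputable def nextAbove (Y : Set ℕ) (n : ℕ) : ℕ := sInf {m | m ∈ Y ∧ n < m}

lemma nextAbove_spec {Y : Set ℕ} (hY : Y.Infinite) (n : ℕ) :
    nextAbove Y n ∈ Y ∧ n < nextAbove Y n :=
  Nat.sInf_mem (hY.exists_gt n)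

def gapSeq (g : ℕ → ℕ) : ℕ → ℕ
  | 0 => 0
  | k + 1 => gapSeq g k + g (gapSeq g k) + 1

lemma gapSeq_strictMono (g : ℕ → ℕ) : StrictMono (gapSeq g) :=
  strictMono_nat_of_lt_succ fun k => by simp only [gapSeq]; omega

lemma lt_gapSeq_succ (g : ℕ → ℕ) (k : ℕ) : g (gapSeq g k) < gapSeq g (k + 1) := by
  simp only [gapSeq]; omega

lemma StrictMono.eq_of_mem_Ioo_succ {a : ℕ → ℕ} (ha : StrictMono a) {i j m : ℕ}
    (hi : m ∈ Ioo (a i) (a (i + 1))) (hj : m ∈ Ioo (a j) (a (j + 1))) : i = j := by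
  by_contra hne
  rcases Nat.lt_or_gt_of_ne hne with h | h
  · have := ha.monotone (show i + 1 ≤ j by omega); simp only [mem_Ioo] at hi hj; omega
  · have := ha.monotone (show j + 1 ≤ i by omega); simp only [mem_Ioo] at hi hj; omega

lemma splits_of_eventually_meets_Ioo {a : ℕ → ℕ} (ha : StrictMono a) {Y : Set ℕ}
    (hY : ∀ᶠ k in atTop, (Y ∩ Ioo (a k) (a (k + 1))).Nonempty) :
    Splits (⋃ k, Ioo (a (2 * k)) (a (2 * k + 1))) Y := by
  obtain ⟨K, hK⟩ := eventually_atTop.1 hY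
  constructor
  · refine infinite_of_forall_exists_gt fun b => ?_
    obtain ⟨m, hmY, hm⟩ := hK (2 * (b + K)) (by omega)
    have := ha.le_apply (x := 2 * (b + K))
    exact ⟨m, ⟨hmY, mem_iUnion.2 ⟨b + K, hm⟩⟩, by simp only [mem_Ioo] at hm; omega⟩
  · refine infinite_of_forall_exists_gt fun b => ?_
    obtain ⟨m, hmY, hm⟩ := hK (2 * (b + K) + 1) (by omega)
    have := ha.le_apply (x := 2 * (b + K) + 1)
    refine ⟨m, ⟨hmY, ?_⟩, by simp only [mem_Ioo] at hm; omega⟩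
    rintro hmX
    obtain ⟨k, hk⟩ := mem_iUnion.1 hmX
    have := ha.eq_of_mem_Ioo_succ hk hm
    omega

lemma splits_of_eventually_nextAbove_le {Y : Set ℕ} (hY : Y.Infinite) {g : ℕ → ℕ}
    (hg : ∀ᶠ n in atTop, nextAbove Y n ≤ g n) :
    Splits (⋃ k, Ioo (gapSeq g (2 * k)) (gapSeq g (2 * k + 1))) Y := by
  refine splits_of_eventually_meets_Ioo (gapSeq_strictMono g) ?_
  filter_upwards [(gapSeq_strictMono g).tendsto_atTop.eventually hg] with k hk
  obtain ⟨hmem, hgt⟩ := nextAbove_spec hY (gapSeq g k)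
  exact ⟨_, hmem, hgt, hk.trans_lt (lt_gapSeq_succ g k)⟩

lemma not_bounded_nextAbove_image {R : Set (Set ℕ)} (hR : ∀ Y ∈ R, Y.Infinite)
    (hRunsplit : ¬ ∃ X : Set ℕ, ∀ Y ∈ R, Splits X Y) :
    ¬ ∃ g : ℕ → ℕ, ∀ f ∈ nextAbove '' R, ∀ᶠ n in atTop, f n ≤ g n := by
  rintro ⟨g, hg⟩
  exact hRunsplit ⟨_, fun Y hY =>
    splits_of_eventually_nextAbove_le (hR Y hY) (hg _ (mem_image_of_mem _ hY))⟩

lemma not_exists_splits_all_infinite :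
    ¬ ∃ X : Set ℕ, ∀ Y ∈ {Y : Set ℕ | Y.Infinite}, Splits X Y := by
  rintro ⟨X, hX⟩
  have hXinf : X.Infinite := by simpa using (hX univ infinite_univ).1
  simpa using (hX X hXinf).2

/-- 𝔟 ≤ 𝔯. -/
theorem stmt2 : boundingNumber ≤ unsplittingNumber := by
  refine le_csInf ⟨_, _, fun _ hY => hY, not_exists_splits_all_infinite, rfl⟩ ?_
  rintro _ ⟨R, hR, hRunsplit, rfl⟩
  calc boundingNumber ≤ #(nextAbove '' R) :=
        csInf_le' ⟨_, not_bounded_nextAbove_image hR hRunsplit, rfl⟩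
    _ ≤ #R := mk_image_le
end

section
/- For chopped reals (x, Π) and (x', Π'): Match(x, Π) ⊆ Match(x', Π') if and only if (x, Π) engulfs (x', Π'). -/
/-!
If `(x, a)` engulfs `(x', a')` and `y` matches `(x, a)`, all but finitely many of the infinitely
many intervals of `a` on which `y` copies `x` contain an interval of `a'` on which `y` copies `x'`,
and distinct intervals of `a` contain distinct intervals of `a'`.

Conversely, if infinitely many intervals of `a` contain no interval of `a'` on which `x = x'`,
keep infinitely many of them, no two adjacent (those of one parity), let `y` copy `x` on them and
`!x'` elsewhere. Then `y` matches `(x, a)`, but an interval of `a'` on which `y` copies `x'` must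
lie in the kept intervals, hence (having no gaps) inside a single one of them, where `x ≠ x'`
somewhere.
-/

/-- `a : ℕ → ℕ` codes a partition of ℕ into consecutive finite intervals
`[a n, a (n+1))` with `a 0 = 0` and `a` strictly increasing. -/
def IntervalPartition (a : ℕ → ℕ) : Prop := a 0 = 0 ∧ StrictMono a

/-- `y` matches the chopped real `(x, a)`: `y` agrees with `x` on infinitely
many intervals of the partition. -/
def Matches (y : ℕ → Bool) (x : ℕ → Bool) (a : ℕ → ℕ) : Prop :=
  { n : ℕ | ∀ i ∈ Set.Ico (a n) (a (n + 1)), y i = x i }.Infinite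

/-- The set of reals matching the chopped real `(x, a)`. -/
def MatchSet (x : ℕ → Bool) (a : ℕ → ℕ) : Set (ℕ → Bool) := { y | Matches y x a }

/-- `(x, a)` engulfs `(x', a')`: all but finitely many intervals of `a` include
an interval of `a'` on which `x` and `x'` agree. -/
def Engulfs (x : ℕ → Bool) (a : ℕ → ℕ) (x' : ℕ → Bool) (a' : ℕ → ℕ) : Prop :=
  { n : ℕ | ¬ ∃ m : ℕ, Set.Ico (a' m) (a' (m + 1)) ⊆ Set.Ico (a n) (a (n + 1)) ∧
      ∀ i ∈ Set.Ico (a' m) (a' (m + 1)), x i = x' i }.Finite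

open Set

theorem Set.Infinite.exists_infinite_subset_add_one_notMem {s : Set ℕ} (hs : s.Infinite) :
    ∃ t ⊆ s, t.Infinite ∧ ∀ n ∈ t, n + 1 ∉ t := by
  rw [← inter_union_sdiff s {n | Even n}, infinite_union] at hs
  rcases hs with hs | hs
  · refine ⟨_, inter_subset_left, hs, fun n hn hn1 => ?_⟩
    exact Nat.even_add_one.mp hn1.2 hn.2
  · refine ⟨_, inter_subset_left, hs, fun n hn hn1 => ?_⟩
    exact hn1.2 (Nat.even_add_one.mpr hn.2)

theorem Monotone.eq_of_mem_Ico_of_mem_Ico {a : ℕ → ℕ} (ha : Monotone a) {p q k : ℕ}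
    (hp : k ∈ Ico (a p) (a (p + 1))) (hq : k ∈ Ico (a q) (a (q + 1))) : p = q := by
  by_contra hpq
  have hdisj := ha.pairwise_disjoint_on_Ico_succ hpq
  simp only [Function.onFun, Order.succ_eq_add_one] at hdisj
  exact disjoint_left.mp hdisj hp hq

theorem StrictMono.exists_Ico_subset_of_subset_biUnion {a : ℕ → ℕ} (ha : StrictMono a)
    {t : Set ℕ} (ht : ∀ n ∈ t, n + 1 ∉ t) {c d : ℕ} (hcd : c < d)
    (h : Ico c d ⊆ ⋃ n ∈ t, Ico (a n) (a (n + 1))) :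
    ∃ n ∈ t, Ico c d ⊆ Ico (a n) (a (n + 1)) := by
  obtain ⟨n, hn, hcn⟩ := mem_iUnion₂.mp (h ⟨le_rfl, hcd⟩)
  refine ⟨n, hn, Ico_subset_Ico hcn.1 ?_⟩
  by_contra! hnd
  obtain ⟨n', hn', hn'_mem⟩ := mem_iUnion₂.mp (h ⟨hcn.2.le, hnd⟩)
  have hsucc : a (n + 1) ∈ Ico (a (n + 1)) (a (n + 1 + 1)) := ⟨le_rfl, ha (Nat.lt_succ_self _)⟩
  exact ht n hn (ha.monotone.eq_of_mem_Ico_of_mem_Ico hn'_mem hsucc ▸ hn')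

theorem matchSet_subset_of_engulfs {x x' : ℕ → Bool} {a a' : ℕ → ℕ} (ha : Monotone a)
    (ha' : StrictMono a') (h : Engulfs x a x' a') : MatchSet x a ⊆ MatchSet x' a' := by
  intro y hy
  have hinner : ∀ n, (∀ i ∈ Ico (a n) (a (n + 1)), y i = x i) →
      (∃ m, Ico (a' m) (a' (m + 1)) ⊆ Ico (a n) (a (n + 1)) ∧
        ∀ i ∈ Ico (a' m) (a' (m + 1)), x i = x' i) →
      ∃ m, Ico (a' m) (a' (m + 1)) ⊆ Ico (a n) (a (n + 1)) ∧
        ∀ i ∈ Ico (a' m) (a' (m + 1)), y i = x' i := by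
    rintro n hyx ⟨m, hmn, hxx'⟩
    exact ⟨m, hmn, fun i hi => (hyx i (hmn hi)).trans (hxx' i hi)⟩
  choose! F hF_sub hF_eq using hinner
  refine infinite_of_injOn_mapsTo (fun n₁ hn₁ n₂ hn₂ hF => ?_)
    (fun n hn => hF_eq n hn.1 (not_not.mp hn.2)) (hy.sdiff h)
  have hstart : a' (F n₁) ∈ Ico (a' (F n₁)) (a' (F n₁ + 1)) := ⟨le_rfl, ha' (Nat.lt_succ_self _)⟩
  exact ha.eq_of_mem_Ico_of_mem_Ico (hF_sub n₁ hn₁.1 (not_not.mp hn₁.2) hstart)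
    (hF_sub n₂ hn₂.1 (not_not.mp hn₂.2) (hF ▸ hstart))

theorem engulfs_of_matchSet_subset {x x' : ℕ → Bool} {a a' : ℕ → ℕ} (ha : StrictMono a)
    (ha' : StrictMono a') (h : MatchSet x a ⊆ MatchSet x' a') : Engulfs x a x' a' := by
  classical
  by_contra hbad
  obtain ⟨t, hbad_t, ht, ht_isolated⟩ :=
    Set.Infinite.exists_infinite_subset_add_one_notMem hbad
  set U := ⋃ n ∈ t, Ico (a n) (a (n + 1))
  set y : ℕ → Bool := fun i => if i ∈ U then x i else !x' i
  have hy : y ∈ MatchSet x a := ht.mono fun n hn i hi =>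
    if_pos (show i ∈ U from mem_iUnion₂.mpr ⟨n, hn, hi⟩)
  obtain ⟨m, hm⟩ := (h hy).nonempty
  have hmU : Ico (a' m) (a' (m + 1)) ⊆ U := fun i hi => by
    by_contra hiU
    simpa [y, hiU] using hm i hi
  obtain ⟨n, hn, hmn⟩ := ha.exists_Ico_subset_of_subset_biUnion ht_isolated
    (ha' (Nat.lt_succ_self m)) hmU
  refine hbad_t hn ⟨m, hmn, fun i hi => ?_⟩
  simpa only [y, if_pos (hmU hi)] using hm i hi

/-- `Match(x, a) ⊆ Match(x', a')` iff `(x, a)` engulfs `(x', a')`. -/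
theorem stmt6 (x x' : ℕ → Bool) (a a' : ℕ → ℕ)
    (ha : IntervalPartition a) (ha' : IntervalPartition a') :
    MatchSet x a ⊆ MatchSet x' a' ↔ Engulfs x a x' a' :=
  ⟨engulfs_of_matchSet_subset ha.2 ha'.2, matchSet_subset_of_engulfs ha.2.monotone ha'.2⟩
end

section
/- If a chopped real (x, Π) engulfs (x', Π'), then every y matching (x, Π) also matches (x', Π'). -/
open Set

/-
Each good interval of `a` (one on which `y` agrees with `x` and which engulfs an interval of `a'`
where `x` agrees with `x'`) yields an interval of `a'` on which `y` agrees with `x'`. Distinct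
intervals of `a` are disjoint and the intervals of `a'` are nonempty, so distinct good intervals
yield distinct intervals of `a'`.
-/

theorem injOn_of_Ico_subset_Ico {a a' f : ℕ → ℕ} {s : Set ℕ} (ha : Monotone a)
    (ha' : StrictMono a')
    (hf : ∀ n ∈ s, Ico (a' (f n)) (a' (f n + 1)) ⊆ Ico (a n) (a (n + 1))) :
    InjOn f s := by
  intro n hn k hk hfnk
  by_contra hne
  obtain ⟨i, hi⟩ := nonempty_Ico.2 (ha' (f n).lt_succ_self)
  have hik : i ∈ Ico (a k) (a (k + 1)) := hf k hk (hfnk ▸ hi)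
  exact (ha.pairwise_disjoint_on_Ico_succ hne).notMem_of_mem_left (hf n hn hi) hik

theorem matches_of_engulfs {x x' y : ℕ → Bool} {a a' : ℕ → ℕ} (ha : Monotone a)
    (ha' : StrictMono a') (heng : Engulfs x a x' a') (hy : Matches y x a) :
    Matches y x' a' := by
  have hgood : ∀ n ∈ {n | ∀ i ∈ Ico (a n) (a (n + 1)), y i = x i} \
      {n | ¬ ∃ m, Ico (a' m) (a' (m + 1)) ⊆ Ico (a n) (a (n + 1)) ∧
        ∀ i ∈ Ico (a' m) (a' (m + 1)), x i = x' i},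
      ∃ m, Ico (a' m) (a' (m + 1)) ⊆ Ico (a n) (a (n + 1)) ∧
        ∀ i ∈ Ico (a' m) (a' (m + 1)), y i = x' i := by
    rintro n ⟨hyx, hengn⟩
    obtain ⟨m, hsub, hxx'⟩ := not_not.mp hengn
    exact ⟨m, hsub, fun i hi => (hyx i (hsub hi)).trans (hxx' i hi)⟩
  choose! f hf using hgood
  exact ((hy.sdiff heng).image (injOn_of_Ico_subset_Ico ha ha' fun n hn => (hf n hn).1)).mono
    (image_subset_iff.2 fun n hn => (hf n hn).2)

/-- If `(x, a)` engulfs `(x', a')`, then every `y` matching `(x, a)` also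
matches `(x', a')`. -/
theorem stmt7 (x x' : ℕ → Bool) (a a' : ℕ → ℕ)
    (ha : IntervalPartition a) (ha' : IntervalPartition a')
    (heng : Engulfs x a x' a') :
    ∀ y : ℕ → Bool, Matches y x a → Matches y x' a' :=
  fun _ hy => matches_of_engulfs ha.2.monotone ha'.2 heng hy
end

section
/- If (x, Π) does not engulf (x', Π'), then there exists y : ℕ → 2 that matches (x, Π) but does not match (x', Π'). -/
/-!
Proof idea: infinitely many intervals `I` of `Π` contain no interval of `Π'` on which `x` and `x'`
agree; keep infinitely many of them, no two adjacent. Let `y` copy `x` on the kept intervals and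
`¬ x'` elsewhere. Then `y` matches `(x, Π)` on every kept interval, while `y` agrees with `x'` on
no interval `J` of `Π'`: either `J` leaves the kept intervals, where `y ≠ x'`, or, the kept
intervals being non-adjacent, `J` lies inside a single kept `I`, where `y = x` and `x ≠ x'`
somewhere on `J`.
-/

open Set

theorem Set.Infinite.exists_subset_forall_add_one_notMem {S : Set ℕ} (hS : S.Infinite) :
    ∃ T ⊆ S, T.Infinite ∧ ∀ n ∈ T, n + 1 ∉ T := by
  rw [← inter_union_compl S {n | Even n}] at hS
  rcases infinite_union.1 hS with h | h
  · exact ⟨_, inter_subset_left, h, fun n hn hn1 => Nat.even_add_one.1 hn1.2 hn.2⟩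
  · exact ⟨_, inter_subset_left, h, fun n hn hn1 => hn1.2 (Nat.even_add_one.2 hn.2)⟩

theorem exists_subset_Ico_of_subset_biUnion_Ico {a : ℕ → ℕ} (ha : StrictMono a) {T : Set ℕ}
    (hT : T.Nonempty) (hsucc : ∀ n ∈ T, n + 1 ∉ T) {l r : ℕ}
    (hlr : Ico l r ⊆ ⋃ n ∈ T, Ico (a n) (a (n + 1))) :
    ∃ n ∈ T, Ico l r ⊆ Ico (a n) (a (n + 1)) := by
  rcases lt_or_ge l r with hlt | hle
  · obtain ⟨n, hn, hln⟩ := mem_iUnion₂.1 (hlr ⟨le_rfl, hlt⟩)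
    refine ⟨n, hn, Ico_subset_Ico hln.1 (not_lt.1 fun hr => ?_)⟩
    -- Otherwise `a (n + 1)` lies in `[l, r)`, hence in a kept interval, which must be `I (n + 1)`.
    obtain ⟨n', hn', hn'_le, hn'_lt⟩ := mem_iUnion₂.1 (hlr ⟨hln.2.le, hr⟩)
    have : n' = n + 1 :=
      le_antisymm (ha.le_iff_le.1 hn'_le) (Nat.lt_add_one_iff.1 (ha.lt_iff_lt.1 hn'_lt))
    exact hsucc n hn (this ▸ hn')
  · obtain ⟨n, hn⟩ := hT
    exact ⟨n, hn, by simp [Ico_eq_empty_of_le hle]⟩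

theorem not_matches_of_forall_exists_ne {y x : ℕ → Bool} {a : ℕ → ℕ}
    (h : ∀ m, ∃ i ∈ Ico (a m) (a (m + 1)), y i ≠ x i) : ¬ Matches y x a := fun hm =>
  let ⟨m, hm⟩ := hm.nonempty
  let ⟨i, hi, hne⟩ := h m
  hne (hm i hi)

theorem stmt8_general (x x' : ℕ → Bool) (a a' : ℕ → ℕ)
    (ha : IntervalPartition a)
    (heng : ¬ Engulfs x a x' a') :
    ∃ y : ℕ → Bool, Matches y x a ∧ ¬ Matches y x' a' := by
  classical
  obtain ⟨T, hTS, hT, hsucc⟩ := Set.Infinite.exists_subset_forall_add_one_notMem heng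
  set U := ⋃ n ∈ T, Ico (a n) (a (n + 1))
  refine ⟨fun i => if i ∈ U then x i else !x' i, ?_, not_matches_of_forall_exists_ne fun m => ?_⟩
  · exact hT.mono fun n hn i hi => if_pos (mem_biUnion hn hi)
  by_cases hJ : Ico (a' m) (a' (m + 1)) ⊆ U
  · obtain ⟨n, hn, hJn⟩ := exists_subset_Ico_of_subset_biUnion_Ico ha.2 hT.nonempty hsucc hJ
    obtain ⟨i, hi, hne⟩ : ∃ i ∈ Ico (a' m) (a' (m + 1)), x i ≠ x' i := by
      by_contra! hagree
      exact hTS hn ⟨m, hJn, hagree⟩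
    exact ⟨i, hi, by simpa [hJ hi] using hne⟩
  · obtain ⟨i, hi, hiU⟩ := not_subset.1 hJ
    exact ⟨i, hi, by simp [hiU]⟩

/-- If `(x, a)` does not engulf `(x', a')`, then some `y` matches `(x, a)` but
not `(x', a')`. -/
theorem stmt8 (x x' : ℕ → Bool) (a a' : ℕ → ℕ)
    (ha : IntervalPartition a) (ha' : IntervalPartition a')
    (heng : ¬ Engulfs x a x' a') :
    ∃ y : ℕ → Bool, Matches y x a ∧ ¬ Matches y x' a' :=
  stmt8_general x x' a a' ha heng
end

section
/- Given f : ℕ → ℕ, let (0, Π) be the chopped real where 0 is the identically zero function and Π is a partition of ℕ into intervals such that for every n, if n lies in interval I_k then f(n) lies in interval I_l for some l ≤ k+1. Given a chopped real (x, Θ), let g : ℕ → ℕ send each n to the right endpoint of the interval of Θ following the one containing n. Then: if (x, Θ) engulfs (0, Π), then f ≤* g. -/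
/-!
For large `n`, lying in the `k`-th interval of `t`, engulfing gives an interval `[p m, p (m+1))`
inside the `(k+1)`-st interval of `t`. It starts beyond `n`, so the `p`-interval of `n` comes
before it, and `f n` lies at most one `p`-interval further, hence below `p (m+1) ≤ t (k+2) = g n`.
-/

lemma IntervalPartition.exists_mem_Ico {a : ℕ → ℕ} (h : IntervalPartition a) (n : ℕ) :
    ∃ k, n ∈ Set.Ico (a k) (a (k + 1)) := by
  have hn : n ∈ Set.Ico (a 0) (a (n + 1)) :=
    ⟨h.1.symm ▸ n.zero_le, n.lt_succ_self.trans_le (h.2.id_le _)⟩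
  obtain ⟨k, -, hk⟩ := Set.mem_iUnion₂.mp (Ico_subset_biUnion_Ico (n + 1) a hn)
  exact ⟨k, hk⟩

lemma Engulfs.eventually_exists_Ico_subset {x x' : ℕ → Bool} {a a' : ℕ → ℕ}
    (h : Engulfs x a x' a') :
    ∀ᶠ k in Filter.atTop, ∃ m, Set.Ico (a' m) (a' (m + 1)) ⊆ Set.Ico (a k) (a (k + 1)) := by
  rw [← Nat.cofinite_eq_atTop]
  filter_upwards [h.eventually_cofinite_notMem] with k hk
  obtain ⟨m, hsub, -⟩ := not_not.mp hk
  exact ⟨m, hsub⟩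

lemma apply_lt_of_Ico_subset_next_Ico {f p t : ℕ → ℕ} (hp : IntervalPartition p)
    (hfp : ∀ n k : ℕ, n ∈ Set.Ico (p k) (p (k + 1)) →
      ∃ l ≤ k + 1, f n ∈ Set.Ico (p l) (p (l + 1)))
    {n k m : ℕ} (hn : n ∈ Set.Ico (t k) (t (k + 1)))
    (hm : Set.Ico (p m) (p (m + 1)) ⊆ Set.Ico (t (k + 1)) (t (k + 2))) :
    f n < t (k + 2) := by
  obtain ⟨hm_left, hm_right⟩ := (Set.Ico_subset_Ico_iff (hp.2 m.lt_succ_self)).mp hm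
  obtain ⟨j, hj⟩ := hp.exists_mem_Ico n
  have hjm : j < m := hp.2.lt_iff_lt.mp (hj.1.trans_lt (hn.2.trans_le hm_left))
  obtain ⟨l, hl, -, hfl⟩ := hfp n j hj
  calc f n < p (l + 1) := hfl
    _ ≤ p (m + 1) := hp.2.monotone (by omega)
    _ ≤ t (k + 2) := hm_right

/-- Given `f : ℕ → ℕ` and a partition `p` with the property that `f` moves each
point at most one interval forward, and given a chopped real `(x, t)` where
`g n` is the right endpoint of the interval of `t` following the one containing
`n`: if `(x, t)` engulfs `(0, p)`, then `f ≤* g`. -/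
theorem stmt9 (f : ℕ → ℕ) (p : ℕ → ℕ) (hp : IntervalPartition p)
    (hfp : ∀ n k : ℕ, n ∈ Set.Ico (p k) (p (k + 1)) →
      ∃ l ≤ k + 1, f n ∈ Set.Ico (p l) (p (l + 1)))
    (x : ℕ → Bool) (t : ℕ → ℕ) (ht : IntervalPartition t)
    (g : ℕ → ℕ)
    (hg : ∀ n k : ℕ, n ∈ Set.Ico (t k) (t (k + 1)) → g n = t (k + 2))
    (heng : Engulfs x t (fun _ => false) p) :
    ∀ᶠ n in Filter.atTop, f n ≤ g n := by
  obtain ⟨K, hK⟩ := Filter.eventually_atTop.mp heng.eventually_exists_Ico_subset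
  refine Filter.eventually_atTop.mpr ⟨t K, fun n hn => ?_⟩
  obtain ⟨k, hk⟩ := ht.exists_mem_Ico n
  have hKk : K ≤ k + 1 := ht.2.le_iff_le.mp (hn.trans hk.2.le)
  obtain ⟨m, hm⟩ := hK (k + 1) hKk
  rw [hg n k hk]
  exact (apply_lt_of_Ico_subset_next_Ico hp hfp hk hm).le
end

section
/- The additivity of Baire category is at most the bounding number: add(meager) ≤ 𝔟. -/
open Cardinal

/-- The additivity of Baire category in Cantor space `ℕ → Bool`: the least
cardinality of a family of meager sets whose union is not meager. -/
noncomputable def addMeager : Cardinal :=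
  sInf { c | ∃ F : Set (Set (ℕ → Bool)),
    (∀ A ∈ F, IsMeagre A) ∧ ¬ IsMeagre (⋃₀ F) ∧ c = #F }

/-- The covering number of Baire category in Cantor space `ℕ → Bool`: the least
cardinality of a family of meager sets covering the space. -/
noncomputable def covMeager : Cardinal :=
  sInf { c | ∃ F : Set (Set (ℕ → Bool)),
    (∀ A ∈ F, IsMeagre A) ∧ ⋃₀ F = Set.univ ∧ c = #F }

namespace Stmt10Aux

open Set Filter

/-- Monotone majorant of `f`. -/
def monoOf (f : ℕ → ℕ) : ℕ → ℕ
  | 0 => f 0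
  | n + 1 => max (monoOf f n) (f (n + 1))

lemma le_monoOf (f : ℕ → ℕ) : ∀ n, f n ≤ monoOf f n
  | 0 => le_refl _
  | n + 1 => le_max_right _ _

lemma monoOf_mono (f : ℕ → ℕ) : Monotone (monoOf f) :=
  monotone_nat_of_le_succ fun n => le_max_left _ _

/-- Iterated interval endpoints determined by `f`. -/
def hIt (f : ℕ → ℕ) : ℕ → ℕ
  | 0 => 0
  | k + 1 => hIt f k + monoOf f (hIt f k) + 1

lemma hIt_strictMono (f : ℕ → ℕ) : StrictMono (hIt f) :=
  strictMono_nat_of_lt_succ fun k => by simp [hIt]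

lemma le_hIt (f : ℕ → ℕ) (k : ℕ) : k ≤ hIt f k :=
  (hIt_strictMono f).le_apply

/-- The meager set associated to `f`. -/
def Mset (f : ℕ → ℕ) : Set (ℕ → Bool) :=
  { x | ∃ N, ∀ k, N ≤ k → x (hIt f k) = false }

lemma isMeagre_Mset (f : ℕ → ℕ) : IsMeagre (Mset f) := by
  have hM : Mset f = ⋃ N, {x : ℕ → Bool | ∀ k, N ≤ k → x (hIt f k) = false} := by
    ext x; simp [Mset]
  rw [hM]
  apply isMeagre_iUnion
  intro N
  set C := {x : ℕ → Bool | ∀ k, N ≤ k → x (hIt f k) = false} with hC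
  have hCc : IsClosed C := by
    have : C = ⋂ k, ⋂ (_ : N ≤ k), (fun x : ℕ → Bool => x (hIt f k)) ⁻¹' {false} := by
      ext x; simp [hC]
    rw [this]
    exact isClosed_iInter fun k => isClosed_iInter fun _ =>
      (isClosed_discrete _).preimage (continuous_apply _)
  have hCi : interior C = ∅ := by
    by_contra h
    obtain ⟨x, hx⟩ := Set.nonempty_iff_ne_empty.mpr h
    obtain ⟨I, u, hu, hsub⟩ := (isOpen_pi_iff.mp isOpen_interior) x hx
    set k := max N (I.sup id + 1) with hk
    have hk1 : N ≤ k := le_max_left _ _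
    have hknotI : hIt f k ∉ I := by
      intro hmem
      have h1 : hIt f k ≤ I.sup id := Finset.le_sup (f := id) hmem
      have h2 : k ≤ hIt f k := le_hIt f k
      have h3 : I.sup id + 1 ≤ k := le_max_right _ _
      omega
    classical
    set y := Function.update x (hIt f k) true with hy
    have hymem : y ∈ (↑I : Set ℕ).pi u := by
      intro a ha
      have hne : a ≠ hIt f k := fun hh => hknotI (hh ▸ (Finset.mem_coe.mp ha))
      have : y a = x a := Function.update_of_ne hne _ _
      rw [this]
      exact (hu a (Finset.mem_coe.mp ha)).2
    have hyC : y ∈ C := interior_subset (hsub hymem)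
    have hfalse := hyC k hk1
    rw [hy] at hfalse
    simp [Function.update_self] at hfalse
  have hcompl := isClosed_isNowhereDense_iff_compl.mp
    ⟨hCc, hCc.isNowhereDense_iff.mpr hCi⟩
  exact residual_of_dense_open hcompl.1 hcompl.2

lemma cylinder_isOpen (n : ℕ) (s : ℕ → Bool) :
    IsOpen {x : ℕ → Bool | ∀ i, i < n → x i = s i} := by
  have : {x : ℕ → Bool | ∀ i, i < n → x i = s i}
      = ⋂ i ∈ Finset.range n, (fun x : ℕ → Bool => x i) ⁻¹' {s i} := by
    ext x; simp [Finset.mem_range]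
  rw [this]
  exact isOpen_biInter_finset fun i _ =>
    (isOpen_discrete _).preimage (continuous_apply i)

/-- In a dense open set, any stem (values below `n`) can be extended to a full
cylinder condition forcing membership. -/
lemma extend_into {U : Set (ℕ → Bool)} (hUo : IsOpen U) (hUd : Dense U)
    (s : ℕ → Bool) (n : ℕ) :
    ∃ m, n ≤ m ∧ ∃ t : ℕ → Bool, (∀ i, i < n → t i = s i) ∧
      ∀ x : ℕ → Bool, (∀ i, i < m → x i = t i) → x ∈ U := by
  obtain ⟨y, hyU, hyc⟩ := hUd.exists_mem_open (cylinder_isOpen n s) ⟨s, fun i _ => rfl⟩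
  obtain ⟨I, u, hu, hsub⟩ := (isOpen_pi_iff.mp hUo) y hyU
  refine ⟨max n (I.sup id + 1), le_max_left _ _, y, fun i hi => hyc i hi, ?_⟩
  intro x hx
  apply hsub
  intro a ha
  have haI : a ≤ I.sup id := Finset.le_sup (f := id) (Finset.mem_coe.mp ha)
  have hlt : a < max n (I.sup id + 1) :=
    lt_of_lt_of_le (Nat.lt_succ_of_le haI) (le_max_right _ _)
  rw [hx a hlt]
  exact (hu a (Finset.mem_coe.mp ha)).2

lemma list_forcing {U : Set (ℕ → Bool)} (hUo : IsOpen U) (hUd : Dense U) (n : ℕ)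
    (L : List (ℕ → Bool)) :
    ∃ m, n ≤ m ∧ ∃ t : ℕ → Bool,
      ∀ s ∈ L, ∀ x : ℕ → Bool, (∀ i, i < n → x i = s i) →
        (∀ i, n ≤ i → i < m → x i = t i) → x ∈ U := by
  induction L with
  | nil => exact ⟨n, le_rfl, fun _ => false, by simp⟩
  | cons s L ih =>
    obtain ⟨m, hnm, t, ht⟩ := ih
    obtain ⟨m', hmm', t', ht'agree, ht'force⟩ :=
      extend_into hUo hUd (fun i => if i < n then s i else t i) m
    refine ⟨m', le_trans hnm hmm', t', ?_⟩
    intro s' hs' x hstem hblock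
    rcases List.mem_cons.mp hs' with rfl | hs'
    · apply ht'force
      intro i him'
      rcases lt_or_ge i n with hin | hin
      · have h1 : t' i = if i < n then s' i else t i :=
          ht'agree i (lt_of_lt_of_le hin hnm)
        rw [if_pos hin] at h1
        rw [h1]
        exact hstem i hin
      · exact hblock i hin him'
    · apply ht s' hs' x hstem
      intro i hi1 hi2
      have h1 : t' i = if i < n then s i else t i := ht'agree i hi2
      rw [if_neg (not_lt.mpr hi1)] at h1
      rw [← h1]
      exact hblock i hi1 (lt_of_lt_of_le hi2 hmm')

/-- In a dense open set, there is a single block pattern on `[n, m)` forcing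
membership regardless of the values below `n`. -/
lemma block_forcing {U : Set (ℕ → Bool)} (hUo : IsOpen U) (hUd : Dense U) (n : ℕ) :
    ∃ m, n < m ∧ ∃ t : ℕ → Bool,
      ∀ x : ℕ → Bool, (∀ i, n ≤ i → i < m → x i = t i) → x ∈ U := by
  classical
  obtain ⟨m, hnm, t, ht⟩ := list_forcing hUo hUd n
    ((Finset.univ : Finset (Fin n → Bool)).toList.map
      fun s i => if h : i < n then s ⟨i, h⟩ else false)
  refine ⟨max m (n + 1), lt_of_lt_of_le (Nat.lt_succ_self n) (le_max_right _ _), t, ?_⟩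
  intro x hx
  apply ht (fun i => if h : i < n then x i else false) ?_ x ?_ ?_
  · exact List.mem_map.mpr ⟨fun i : Fin n => x i,
      Finset.mem_toList.mpr (Finset.mem_univ _), rfl⟩
  · intro i hi
    simp [hi]
  · intro i hi1 hi2
    exact hx i hi1 (lt_of_lt_of_le hi2 (le_max_left _ _))

/-- Auxiliary recursion building the master sequence of blocks. -/
def seqAux (M : ℕ → ℕ → ℕ) (T : ℕ → ℕ → ℕ → Bool) : ℕ → ℕ × (ℕ → Bool)
  | 0 => (0, fun _ => false)
  | k + 1 =>
    let q := seqAux M T k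
    (M k q.1, fun i => if i < q.1 then q.2 i else T k q.1 i)

/-- Master sequence: a single chopped real `(n, y)` such that agreeing with `y`
on the `k`-th block forces membership in `V k`. -/
lemma master (V : ℕ → Set (ℕ → Bool)) (ho : ∀ k, IsOpen (V k)) (hd : ∀ k, Dense (V k)) :
    ∃ n : ℕ → ℕ, ∃ y : ℕ → Bool, StrictMono n ∧ n 0 = 0 ∧
      ∀ k, ∀ x : ℕ → Bool, (∀ i, n k ≤ i → i < n (k + 1) → x i = y i) → x ∈ V k := by
  have hbf : ∀ k q, ∃ m, q < m ∧ ∃ t : ℕ → Bool,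
      ∀ x : ℕ → Bool, (∀ i, q ≤ i → i < m → x i = t i) → x ∈ V k :=
    fun k q => block_forcing (ho k) (hd k) q
  choose M hMlt T hT using hbf
  set p := seqAux M T with hp
  have hsucc : ∀ k, p (k + 1) =
      (M k (p k).1, fun i => if i < (p k).1 then (p k).2 i else T k (p k).1 i) :=
    fun k => rfl
  set n : ℕ → ℕ := fun k => (p k).1 with hn
  have hM1 : ∀ k, n (k + 1) = M k (n k) := fun k => congrArg Prod.fst (hsucc k)
  have hlt : ∀ k, n k < n (k + 1) := fun k => by
    rw [hM1 k]
    exact hMlt k (n k)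
  have hsm : StrictMono n := strictMono_nat_of_lt_succ hlt
  have hagree : ∀ k l, k ≤ l → ∀ i, i < n k → (p l).2 i = (p k).2 i := by
    intro k l hkl
    induction l, hkl using Nat.le_induction with
    | base => intro i _; rfl
    | succ l hkl ih =>
      intro i hi
      have hi' : i < n l := lt_of_lt_of_le hi (hsm.monotone hkl)
      rw [hsucc l]
      simp only []
      rw [if_pos hi']
      exact ih i hi
  set y : ℕ → Bool := fun i => (p (i + 1)).2 i with hy
  refine ⟨n, y, hsm, rfl, ?_⟩
  intro k x hx
  apply hT k (n k)
  intro i hi1 hi2'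
  have hi2 : i < n (k + 1) := by
    rw [hM1 k]
    exact hi2'
  have h1 : x i = y i := hx i hi1 hi2
  have h2 : (p (i + 1)).2 i = (p (k + 1)).2 i := by
    have hki : k + 1 ≤ i + 1 := by
      have := hsm.le_apply (x := k)
      omega
    exact hagree (k + 1) (i + 1) hki i hi2
  have h3 : (p (k + 1)).2 i = T k (n k) i := by
    rw [hsucc k]
    simp only []
    rw [if_neg (not_lt.mpr hi1)]
  rw [h1, hy]
  simp only []
  rw [h2, h3]

/-- Nested finite intersections of the sequence `U`. -/
def interW (U : ℕ → Set (ℕ → Bool)) : ℕ → Set (ℕ → Bool)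
  | 0 => U 0
  | k + 1 => interW U k ∩ U (k + 1)

lemma interW_isOpen (U : ℕ → Set (ℕ → Bool)) (hU : ∀ j, IsOpen (U j)) :
    ∀ k, IsOpen (interW U k)
  | 0 => hU 0
  | k + 1 => (interW_isOpen U hU k).inter (hU (k + 1))

lemma interW_dense (U : ℕ → Set (ℕ → Bool)) (hUo : ∀ j, IsOpen (U j))
    (hUd : ∀ j, Dense (U j)) : ∀ k, Dense (interW U k)
  | 0 => hUd 0
  | k + 1 => (interW_dense U hUo hUd k).inter_of_isOpen_left (hUd (k + 1))
      (interW_isOpen U hUo k)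

lemma interW_subset (U : ℕ → Set (ℕ → Bool)) :
    ∀ k j, j ≤ k → interW U k ⊆ U j := by
  intro k
  induction k with
  | zero => intro j hj; rw [Nat.le_zero.mp hj]; exact le_refl _
  | succ k ih =>
    intro j hj
    rcases Nat.lt_or_ge j (k + 1) with h | h
    · exact Set.Subset.trans Set.inter_subset_left (ih j (Nat.lt_succ_iff.mp h))
    · have : j = k + 1 := le_antisymm hj h
      rw [this]
      exact Set.inter_subset_right

/-- Interval location for a strictly monotone sequence starting at 0. -/
lemma exists_block (e : ℕ → ℕ) (he : StrictMono e) (h0 : e 0 = 0) (m : ℕ) :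
    ∃ k, e k ≤ m ∧ m < e (k + 1) := by
  classical
  have hP0 : e 0 ≤ m := by omega
  set k := Nat.findGreatest (fun k => e k ≤ m) (m + 1) with hk
  have hPk : e k ≤ m := Nat.findGreatest_spec (P := fun k => e k ≤ m) (m := 0) (Nat.zero_le _) hP0
  refine ⟨k, hPk, ?_⟩
  by_contra h
  push_neg at h
  have hk1 : k + 1 ≤ m + 1 := by
    have := (he.le_apply (x := k + 1)).trans h
    omega
  exact Nat.findGreatest_is_greatest (Nat.lt_succ_self k) hk1 h

/-- If beyond `K` the intervals of `f` are short relative to `g`, then `f` is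
dominated by `m ↦ g (m + g m + 1)`. -/
lemma dominate (f g : ℕ → ℕ) (hg : Monotone g) (K : ℕ)
    (h : ∀ k, K ≤ k → monoOf f (hIt f k) < g (hIt f k)) :
    ∀ m, hIt f K ≤ m → f m ≤ g (m + g m + 1) := by
  intro m hm
  obtain ⟨k, hk1, hk2⟩ := exists_block (hIt f) (hIt_strictMono f) rfl m
  have hKk : K ≤ k := by
    by_contra hlt
    push_neg at hlt
    have : hIt f (k + 1) ≤ hIt f K := (hIt_strictMono f).monotone hlt
    omega
  have hstep1 : hIt f (k + 1) = hIt f k + monoOf f (hIt f k) + 1 := rfl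
  have h1 : hIt f (k + 1) ≤ m + g m + 1 := by
    have h2 := h k hKk
    have h3 : g (hIt f k) ≤ g m := hg hk1
    omega
  calc f m ≤ monoOf f m := le_monoOf f m
    _ ≤ monoOf f (hIt f (k + 1)) := monoOf_mono f (le_of_lt hk2)
    _ ≤ g (hIt f (k + 1)) := le_of_lt (h (k + 1) (by omega))
    _ ≤ g (m + g m + 1) := hg h1

/-- Main lemma: the union of the `Mset f`, `f ∈ B`, over an unbounded family `B`
is not meager. -/
lemma not_meagre_union (B : Set (ℕ → ℕ))
    (hB : ¬ ∃ g : ℕ → ℕ, ∀ f ∈ B, ∀ᶠ n in Filter.atTop, f n ≤ g n) :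
    ¬ IsMeagre (⋃₀ ((fun f => Mset f) '' B)) := by
  classical
  intro hmg
  rw [IsMeagre, mem_residual_iff] at hmg
  obtain ⟨S, hSo, hSd, hScnt, hSsub⟩ := hmg
  obtain ⟨U, hUo, hUd, hUsub⟩ : ∃ U : ℕ → Set (ℕ → Bool),
      (∀ j, IsOpen (U j)) ∧ (∀ j, Dense (U j)) ∧
      (⋂ j, U j) ⊆ (⋃₀ ((fun f => Mset f) '' B))ᶜ := by
    rcases Set.eq_empty_or_nonempty S with rfl | hSne
    · refine ⟨fun _ => Set.univ, fun _ => isOpen_univ, fun _ => dense_univ, ?_⟩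
      have : (⋂₀ (∅ : Set (Set (ℕ → Bool)))) ⊆ _ := hSsub
      rw [Set.sInter_empty] at this
      intro x _
      exact this (Set.mem_univ x)
    · obtain ⟨e, he⟩ := hScnt.exists_eq_range hSne
      refine ⟨e, fun j => hSo _ (he ▸ Set.mem_range_self j),
        fun j => hSd _ (he ▸ Set.mem_range_self j), ?_⟩
      have : (⋂ j, e j) = ⋂₀ S := by rw [he, Set.sInter_range]
      rw [this]
      exact hSsub
  obtain ⟨n, y, hsm, hn0, hforce⟩ :=
    master (interW U) (interW_isOpen U hUo) (interW_dense U hUo hUd)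
  set g : ℕ → ℕ := fun m => n (m + 2) with hgdef
  have hgmono : Monotone g := fun a b hab => hsm.monotone (by omega)
  push_neg at hB
  obtain ⟨f, hfB, hfG⟩ := hB (fun m => g (m + g m + 1))
  have hfreq : ∀ K, ∃ k, K ≤ k ∧ g (hIt f k) ≤ monoOf f (hIt f k) := by
    intro K
    by_contra hcon
    push_neg at hcon
    apply hfG
    rw [Filter.eventually_atTop]
    exact ⟨hIt f K, fun m hm => not_lt.mpr (dominate f g hgmono K hcon m hm)⟩
  set x : ℕ → Bool := fun i => if ∃ k, hIt f k = i then false else y i with hxdef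
  have hxM : x ∈ Mset f := by
    refine ⟨0, fun k _ => ?_⟩
    rw [hxdef]
    simp only []
    rw [if_pos ⟨k, rfl⟩]
  have hxUn : x ∈ ⋃₀ ((fun f => Mset f) '' B) :=
    ⟨Mset f, ⟨f, hfB, rfl⟩, hxM⟩
  obtain ⟨j₀, hj₀⟩ : ∃ j₀, x ∉ U j₀ := by
    by_contra hcon
    push_neg at hcon
    exact (hUsub (Set.mem_iInter.mpr hcon)) hxUn
  obtain ⟨k, hkK, hkg⟩ := hfreq (n j₀)
  have hnk : n j₀ ≤ hIt f k := le_trans hkK (le_hIt f k)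
  have hex : ∃ j, hIt f k < n j :=
    ⟨hIt f k + 1, lt_of_lt_of_le (Nat.lt_succ_self _) hsm.le_apply⟩
  set j := Nat.find hex with hjdef
  have hj1 : hIt f k < n j := Nat.find_spec hex
  have hjle : j ≤ hIt f k + 1 :=
    Nat.find_le (lt_of_lt_of_le (Nat.lt_succ_self _) hsm.le_apply)
  have hstep : hIt f (k + 1) = hIt f k + monoOf f (hIt f k) + 1 := rfl
  have hj2 : n (j + 1) ≤ hIt f (k + 1) := by
    have h1 : n (j + 1) ≤ n (hIt f k + 2) := hsm.monotone (by omega)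
    have h2 : n (hIt f k + 2) = g (hIt f k) := rfl
    omega
  have hj₀j : j₀ ≤ j := by
    by_contra hc
    push_neg at hc
    have := hsm hc
    omega
  have hagreeblk : ∀ i, n j ≤ i → i < n (j + 1) → x i = y i := by
    intro i hi1 hi2
    rw [hxdef]
    simp only []
    rw [if_neg]
    rintro ⟨k', rfl⟩
    rcases le_or_gt k' k with h | h
    · have : hIt f k' ≤ hIt f k := (hIt_strictMono f).monotone h
      omega
    · have : hIt f (k + 1) ≤ hIt f k' := (hIt_strictMono f).monotone h
      omega
  have hxW : x ∈ interW U j := hforce j x hagreeblk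
  exact hj₀ (interW_subset U j j₀ hj₀j hxW)

end Stmt10Aux

/-- add(meager) ≤ 𝔟. -/
theorem stmt10 : addMeager ≤ boundingNumber := by
  have hne : { c | ∃ B : Set (ℕ → ℕ),
      (¬ ∃ g : ℕ → ℕ, ∀ f ∈ B, ∀ᶠ n in Filter.atTop, f n ≤ g n) ∧ c = #B }.Nonempty := by
    refine ⟨#(Set.univ : Set (ℕ → ℕ)), Set.univ, ?_, rfl⟩
    rintro ⟨g, hg⟩
    obtain ⟨m, hm⟩ := (hg (fun m => g m + 1) (Set.mem_univ _)).exists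
    omega
  obtain ⟨B, hBunb, hBeq⟩ := csInf_mem hne
  have hmain : addMeager ≤ #((fun f => Stmt10Aux.Mset f) '' B) := by
    apply csInf_le'
    refine ⟨(fun f => Stmt10Aux.Mset f) '' B, ?_, ?_, rfl⟩
    · rintro A ⟨f, _, rfl⟩
      exact Stmt10Aux.isMeagre_Mset f
    · exact Stmt10Aux.not_meagre_union B hBunb
  calc addMeager ≤ #((fun f => Stmt10Aux.Mset f) '' B) := hmain
    _ ≤ #B := Cardinal.mk_image_le
    _ = boundingNumber := hBeq.symm
end

section
/- The additivity of Baire category equals the minimum of the covering number of category and the bounding number: add(meager) = min(cov(meager), 𝔟); in particular add(meager) ≥ min(cov(meager), 𝔟). -/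
open Cardinal

namespace CantorAdd

open Filter Set

abbrev X := ℕ → Bool

/-- The cylinder of points agreeing with `z` below `m`. -/
def cyl (m : ℕ) (z : X) : Set X := {y | ∀ i < m, y i = z i}

lemma self_mem_cyl (m : ℕ) (z : X) : z ∈ cyl m z := fun _ _ => rfl

lemma isOpen_cyl (m : ℕ) (z : X) : IsOpen (cyl m z) := by
  have h : cyl m z = ⋂ i ∈ Finset.range m, ((fun y : X => y i) ⁻¹' {z i}) := by
    ext y; simp [cyl]
  rw [h]
  exact isOpen_biInter_finset fun i _ =>
    (continuous_apply i).isOpen_preimage _ (isOpen_discrete _)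

lemma exists_cyl_subset {s : Set X} (hs : IsOpen s) {x : X} (hx : x ∈ s) :
    ∃ m, cyl m x ⊆ s := by
  rw [isOpen_pi_iff] at hs
  obtain ⟨I, u, hu, hsub⟩ := hs x hx
  rcases I.bddAbove with ⟨m, hm⟩
  refine ⟨m + 1, fun y hy => hsub ?_⟩
  intro i hi
  have : y i = x i := hy i (Nat.lt_succ_of_le (hm hi))
  rw [this]; exact (hu i hi).2

lemma cyl_mono {m m' : ℕ} (h : m ≤ m') (z : X) : cyl m' z ⊆ cyl m z :=
  fun _ hy i hi => hy i (lt_of_lt_of_le hi h)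

/-- Extension lemma: from any point and position one can extend into the
complement of a closed set with empty interior. -/
lemma nwd_ext {F : Set X} (hF : IsClosed F) (hN : interior F = ∅) (z : X) (m : ℕ) :
    ∃ (w : X) (c : ℕ), m ≤ c ∧ (∀ i < m, w i = z i) ∧ cyl c w ∩ F = ∅ := by
  have hd : Dense Fᶜ := interior_eq_empty_iff_dense_compl.mp hN
  obtain ⟨w, hw1, hw2⟩ := hd.exists_mem_open (isOpen_cyl m z) ⟨z, self_mem_cyl m z⟩
  obtain ⟨c', hc'⟩ := exists_cyl_subset hF.isOpen_compl hw1
  refine ⟨w, max m c', le_max_left _ _, fun i hi => hw2 i hi, ?_⟩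
  rw [Set.eq_empty_iff_forall_notMem]
  intro y hy
  exact hc' (cyl_mono (le_max_right m c') w hy.1) hy.2

/-- Override `y` below `b` by `s`. -/
def ovr (b : ℕ) (s y : X) : X := fun i => if i < b then s i else y i

lemma ext_list {F : Set X} (hF : IsClosed F) (hN : interior F = ∅) (b : ℕ) :
    ∀ (L : List X) (z : X) (m : ℕ), b ≤ m →
    ∃ (z' : X) (m' : ℕ), m ≤ m' ∧ (∀ i < m, z' i = z i) ∧
      ∀ s ∈ L, ∀ y : X, (∀ i < m', y i = z' i) → ovr b s y ∉ F := by
  intro L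
  induction L with
  | nil => exact fun z m hm => ⟨z, m, le_refl m, fun _ _ => rfl, by simp⟩
  | cons s L ih =>
    intro z m hm
    obtain ⟨w, c, hmc, hwz, hcw⟩ := nwd_ext hF hN (ovr b s z) m
    set z1 : X := fun i => if i < b then z i else w i with hz1
    obtain ⟨z', m', hcm', hz'z1, hL⟩ := ih z1 c (le_trans hm hmc)
    refine ⟨z', m', le_trans hmc hcm', ?_, ?_⟩
    · intro i hi
      have h1 : z' i = z1 i := hz'z1 i (lt_of_lt_of_le hi hmc)
      rw [h1, hz1]
      by_cases hib : i < b
      · simp [hib]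
      · simp only [hib, if_neg]
        have := hwz i hi
        rw [this, ovr]
        simp [hib]
    · intro t ht y hy
      rcases List.mem_cons.mp ht with rfl | htL
      · -- head pattern
        intro hyF
        have hmem : ovr b t y ∈ cyl c w := by
          intro i hic
          by_cases hib : i < b
          · have : w i = ovr b t z i := hwz i (lt_of_lt_of_le hib hm)
            rw [ovr] at this ⊢
            simp only [hib, if_pos] at this ⊢
            rw [this]
          · have h1 : y i = z' i := hy i (lt_of_lt_of_le hic hcm')
            have h2 : z' i = z1 i := hz'z1 i hic
            rw [ovr]
            simp only [hib, if_neg]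
            rw [h1, h2, hz1]
            simp [hib]
        have : ovr b t y ∈ cyl c w ∩ F := ⟨hmem, hyF⟩
        rw [hcw] at this
        exact this
      · exact hL t htL y hy

/-- Complete list of patterns below `b`. -/
noncomputable def patList (b : ℕ) : List X :=
  (Finset.univ : Finset (Fin b → Bool)).toList.map
    (fun f i => if h : i < b then f ⟨i, h⟩ else false)

lemma patList_complete (b : ℕ) (y : X) :
    ∃ s ∈ patList b, ∀ i < b, s i = y i := by
  refine ⟨fun i => if h : i < b then y i else false, ?_, ?_⟩
  · rw [patList, List.mem_map]
    refine ⟨fun j => y j.1, Finset.mem_toList.mpr (Finset.mem_univ _), ?_⟩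
    funext i
    by_cases h : i < b <;> simp [h]
  · intro i hi; simp [hi]

/-- Key step: one can choose an interval `[b, c)` and a pattern `w` there such
that any point matching `w` on that interval avoids `F`. -/
lemma key_step {F : Set X} (hF : IsClosed F) (hN : interior F = ∅) (b : ℕ) :
    ∃ (c : ℕ) (w : X), b < c ∧ ∀ y : X, (∀ i, b ≤ i → i < c → y i = w i) → y ∉ F := by
  obtain ⟨z', m', hmm', _, hL⟩ :=
    ext_list hF hN b (patList b) (fun _ => false) b (le_refl b)
  refine ⟨m' + 1, z', Nat.lt_succ_of_le hmm', fun y hy hyF => ?_⟩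
  obtain ⟨s, hsL, hs⟩ := patList_complete b y
  set y1 : X := fun i => if i < b then z' i else y i with hy1
  have h1 : ∀ i < m', y1 i = z' i := by
    intro i hi
    rw [hy1]
    by_cases hib : i < b
    · simp [hib]
    · simp only [hib, if_neg]
      exact hy i (le_of_not_gt hib) (Nat.lt_succ_of_lt hi)
  have h2 : ovr b s y1 = y := by
    funext i
    rw [ovr]
    by_cases hib : i < b
    · simp only [hib, if_pos]; exact hs i hib
    · simp [hy1, hib]
  exact hL s hsL y1 h1 (h2 ▸ hyF)

/-- `y` agrees with `x` on `[p, q)`. -/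
def agreeOn (y x : X) (p q : ℕ) : Prop := ∀ i, p ≤ i → i < q → y i = x i

/-- The canonical meager set associated to a pattern `x` and an interval
partition given by `a`: eventual mismatch on every interval. -/
def Mset (x : X) (a : ℕ → ℕ) : Set X :=
  {y | ∀ᶠ n in atTop, ¬ agreeOn y x (a n) (a (n + 1))}

lemma meagre_of_closed_nwd {C : Set X} (hc : IsClosed C) (hi : interior C = ∅) :
    IsMeagre C := by
  rw [isMeagre_iff_countable_union_isNowhereDense]
  refine ⟨{C}, ?_, countable_singleton C, by simp⟩
  intro t ht
  rw [mem_singleton_iff] at ht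
  subst ht
  rw [IsNowhereDense, hc.closure_eq]
  exact hi

lemma isClosed_notAgree (x : X) (p q : ℕ) :
    IsClosed {y : X | ¬ agreeOn y x p q} := by
  have h : {y : X | ¬ agreeOn y x p q}
      = ⋃ i ∈ Finset.Ico p q, ((fun y : X => y i) ⁻¹' {x i}ᶜ) := by
    ext y
    simp only [mem_setOf_eq, agreeOn, mem_iUnion, Finset.mem_Ico, mem_preimage,
      mem_compl_iff, mem_singleton_iff]
    push_neg
    constructor
    · rintro ⟨i, hp, hq, hne⟩; exact ⟨i, ⟨hp, hq⟩, hne⟩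
    · rintro ⟨i, ⟨hp, hq⟩, hne⟩; exact ⟨i, hp, hq, hne⟩
  rw [h]
  exact isClosed_biUnion_finset fun i _ =>
    IsClosed.preimage (continuous_apply i) (isClosed_discrete _)

lemma meager_Mset {x : X} {a : ℕ → ℕ} (ha : StrictMono a) : IsMeagre (Mset x a) := by
  have hM : Mset x a = ⋃ N, {y : X | ∀ n, N ≤ n → ¬ agreeOn y x (a n) (a (n + 1))} := by
    ext y
    simp only [Mset, mem_setOf_eq, eventually_atTop, mem_iUnion]
  rw [hM]
  refine isMeagre_iUnion fun N => meagre_of_closed_nwd ?_ ?_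
  · have h : {y : X | ∀ n, N ≤ n → ¬ agreeOn y x (a n) (a (n + 1))}
        = ⋂ n, ⋂ (_ : N ≤ n), {y : X | ¬ agreeOn y x (a n) (a (n + 1))} := by
      ext y; simp
    rw [h]
    exact isClosed_iInter fun n => isClosed_iInter fun _ => isClosed_notAgree x _ _
  · rw [eq_empty_iff_forall_notMem]
    intro y hy
    obtain ⟨m, hm⟩ := exists_cyl_subset isOpen_interior hy
    set n := max N m with hn
    set u : X := fun i => if i < m then y i else x i with hu
    have hu1 : u ∈ cyl m y := fun i hi => by simp [hu, hi]
    have hu2 : u ∈ {y : X | ∀ n, N ≤ n → ¬ agreeOn y x (a n) (a (n + 1))} :=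
      interior_subset (hm hu1)
    refine hu2 n (le_max_left N m) ?_
    intro i hi _
    have h1 : m ≤ i := le_trans (le_trans (le_max_right N m) (ha.le_apply)) hi
    simp [hu, Nat.not_lt.mpr h1]

/-- Decompose a meager set as contained in an increasing union of closed sets
with empty interior. -/
lemma meagre_decomp {M : Set X} (hM : IsMeagre M) :
    ∃ F : ℕ → Set X, (∀ n, IsClosed (F n)) ∧ (∀ n, interior (F n) = ∅) ∧
      (∀ m n, m ≤ n → F m ⊆ F n) ∧ M ⊆ ⋃ n, F n := by
  obtain ⟨S, hnwd, hcnt, hsub⟩ := isMeagre_iff_countable_union_isNowhereDense.mp hM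
  have hcnt' : (insert (∅ : Set X) S).Countable := hcnt.insert ∅
  obtain ⟨f, hf⟩ := (hcnt'.exists_eq_range (insert_nonempty _ _))
  have hfn : ∀ n, IsNowhereDense (f n) := by
    intro n
    have : f n ∈ insert (∅ : Set X) S := hf ▸ mem_range_self n
    rcases this with h | h
    · rw [h]; exact isNowhereDense_empty
    · exact hnwd _ h
  refine ⟨fun n => ⋃ j ∈ Finset.range (n + 1), closure (f j),
    fun n => isClosed_biUnion_finset fun j _ => isClosed_closure,
    ?_, ?_, ?_⟩
  · intro n
    induction n with
    | zero =>
      show interior (⋃ j ∈ Finset.range (0 + 1), closure (f j)) = ∅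
      have h0 : (⋃ j ∈ Finset.range (0 + 1), closure (f j)) = closure (f 0) := by
        simp
      rw [h0]
      have := (hfn 0).closure
      rwa [IsNowhereDense, closure_closure] at this
    | succ n ih =>
      show interior (⋃ j ∈ Finset.range (n + 1 + 1), closure (f j)) = ∅
      simp only [interior_eq_empty_iff_dense_compl] at ih ⊢
      have h1 : (⋃ j ∈ Finset.range (n + 1 + 1), closure (f j))
          = (⋃ j ∈ Finset.range (n + 1), closure (f j)) ∪ closure (f (n + 1)) := by
        rw [Finset.range_add_one]
        simp [Set.biUnion_insert, Set.union_comm]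
      simp only [h1, Set.compl_union]
      refine Dense.inter_of_isOpen_left ih ?_ ?_
      · rw [← interior_eq_empty_iff_dense_compl]
        have := (hfn (n + 1)).closure
        rwa [IsNowhereDense, closure_closure] at this
      · exact isOpen_compl_iff.mpr (isClosed_biUnion_finset fun j _ => isClosed_closure)
  · intro m n hmn y hy
    simp only [mem_iUnion, Finset.mem_range] at hy ⊢
    obtain ⟨j, hj, hyj⟩ := hy
    exact ⟨j, lt_of_lt_of_le hj (by omega), hyj⟩
  · intro y hy
    obtain ⟨t, htS, hyt⟩ := hsub hy
    have : t ∈ insert (∅ : Set X) S := mem_insert_of_mem _ htS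
    rw [hf] at this
    obtain ⟨k, hk⟩ := this
    simp only [mem_iUnion, Finset.mem_range]
    exact ⟨k, k, Nat.lt_succ_self k, hk ▸ subset_closure hyt⟩

/-- The recursive construction of intervals and patterns avoiding each `F n`. -/
noncomputable def buildSeq (F : ℕ → Set X)
    (h : ∀ n, IsClosed (F n) ∧ interior (F n) = ∅) : ℕ → ℕ × X
  | 0 => (0, fun _ => false)
  | n + 1 =>
    ⟨(key_step (h n).1 (h n).2 (buildSeq F h n).1).choose,
     (key_step (h n).1 (h n).2 (buildSeq F h n).1).choose_spec.choose⟩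

lemma buildSeq_spec (F : ℕ → Set X)
    (h : ∀ n, IsClosed (F n) ∧ interior (F n) = ∅) (n : ℕ) :
    (buildSeq F h n).1 < (buildSeq F h (n + 1)).1 ∧
      ∀ y : X, (∀ i, (buildSeq F h n).1 ≤ i → i < (buildSeq F h (n + 1)).1 →
        y i = (buildSeq F h (n + 1)).2 i) → y ∉ F n := by
  have := (key_step (h n).1 (h n).2 (buildSeq F h n).1).choose_spec.choose_spec
  exact this

/-- Structural lemma: every meager set is contained in some `Mset`. -/
lemma exists_Mset {M : Set X} (hM : IsMeagre M) :
    ∃ (x : X) (a : ℕ → ℕ), StrictMono a ∧ M ⊆ Mset x a := by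
  obtain ⟨F, hFc, hFi, hFmono, hMF⟩ := meagre_decomp hM
  have h : ∀ n, IsClosed (F n) ∧ interior (F n) = ∅ := fun n => ⟨hFc n, hFi n⟩
  set a : ℕ → ℕ := fun n => (buildSeq F h n).1 with haeq
  have hamono : StrictMono a :=
    strictMono_nat_of_lt_succ fun n => (buildSeq_spec F h n).1
  set x : X := fun i =>
    (buildSeq F h (Nat.findGreatest (fun n => a n ≤ i) i + 1)).2 i with hxeq
  refine ⟨x, a, hamono, ?_⟩
  intro y hy
  obtain ⟨k, hk⟩ := mem_iUnion.mp (hMF hy)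
  rw [Mset, mem_setOf_eq, eventually_atTop]
  refine ⟨k, fun n hn hagree => ?_⟩
  have hfind : ∀ i, a n ≤ i → i < a (n + 1) →
      Nat.findGreatest (fun m => a m ≤ i) i = n := by
    intro i h1 h2
    rw [Nat.findGreatest_eq_iff]
    refine ⟨le_trans hamono.le_apply h1, fun _ => h1, fun m hm hmi hami => ?_⟩
    exact absurd (lt_of_lt_of_le h2 (hamono.monotone hm)) (not_lt.mpr hami)
  have : y ∉ F n := by
    refine (buildSeq_spec F h n).2 y fun i h1 h2 => ?_
    have := hagree i h1 h2
    rw [this, hxeq]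
    simp only [hfind i h1 h2]
  exact this (hFmono k n hn hk)

/-! ### Combinatorial helpers -/

/-- A strictly monotone majorant of `f`, also at least the identity. -/
def maj (f : ℕ → ℕ) (n : ℕ) : ℕ := (Finset.range (n + 1)).sup f + n

lemma le_maj (f : ℕ → ℕ) (n : ℕ) : f n ≤ maj f n :=
  le_add_of_le_of_nonneg (Finset.le_sup (Finset.self_mem_range_succ n)) (Nat.zero_le n)

lemma id_le_maj (f : ℕ → ℕ) (n : ℕ) : n ≤ maj f n := Nat.le_add_left n _

lemma maj_mono (f : ℕ → ℕ) : Monotone (maj f) := by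
  intro m n hmn
  exact Nat.add_le_add (Finset.sup_mono (Finset.range_subset_range.mpr (by omega))) hmn

lemma maj_strictMono (f : ℕ → ℕ) : StrictMono (maj f) := by
  intro m n hmn
  calc maj f m < maj f m + (n - m) := by omega
  _ ≤ maj f n := by
      rw [maj, maj]
      have h1 : (Finset.range (m + 1)).sup f ≤ (Finset.range (n + 1)).sup f :=
        Finset.sup_mono (Finset.range_subset_range.mpr (by omega))
      omega

/-- Block sequence: iterate `maj g · + 1` starting from `0`. -/
def blocks (g : ℕ → ℕ) : ℕ → ℕ
  | 0 => 0
  | m + 1 => maj g (blocks g m) + 1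

lemma blocks_strictMono (g : ℕ → ℕ) : StrictMono (blocks g) :=
  strictMono_nat_of_lt_succ fun n =>
    Nat.lt_succ_of_le (id_le_maj g (blocks g n))

lemma lt_blocks_succ (g : ℕ → ℕ) (m : ℕ) : g (blocks g m) < blocks g (m + 1) :=
  Nat.lt_succ_of_le (le_maj g (blocks g m))

/-! ### Cardinal helpers -/

lemma exists_dominating {ι : Type} {F : Set ι} (φ : ι → ℕ → ℕ)
    (h : #F < boundingNumber) :
    ∃ g : ℕ → ℕ, ∀ A ∈ F, ∀ᶠ k in atTop, φ A k ≤ g k := by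
  by_contra hc
  push_neg at hc
  have hmem : boundingNumber ≤ #(φ '' F) := by
    refine csInf_le (OrderBot.bddBelow _) ⟨φ '' F, ?_, rfl⟩
    rintro ⟨g, hg⟩
    obtain ⟨A, hA, hnA⟩ := hc g
    exact hnA ((hg (φ A) (mem_image_of_mem φ hA)).mono fun n hn => not_lt.mpr hn)
  exact absurd (lt_of_le_of_lt (hmem.trans Cardinal.mk_image_le) h) (lt_irrefl _)

lemma exists_avoid {ι : Type} {F : Set ι} (ψ : ι → Set X)
    (hm : ∀ A ∈ F, IsMeagre (ψ A)) (h : #F < covMeager) :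
    ∃ d : X, ∀ A ∈ F, d ∉ ψ A := by
  by_contra hc
  push_neg at hc
  have hmem : covMeager ≤ #(ψ '' F) := by
    refine csInf_le (OrderBot.bddBelow _) ⟨ψ '' F, ?_, ?_, rfl⟩
    · rintro B ⟨A, hA, rfl⟩
      exact hm A hA
    · rw [eq_univ_iff_forall]
      intro d
      obtain ⟨A, hA, hdA⟩ := hc d
      exact ⟨ψ A, mem_image_of_mem ψ hA, hdA⟩
  exact absurd (lt_of_le_of_lt (hmem.trans Cardinal.mk_image_le) h) (lt_irrefl _)

/-! ### Basic facts about the Cantor space -/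

lemma univ_not_meagre : ¬ IsMeagre (Set.univ : Set X) := by
  intro h
  have hd : Dense ((Set.univ : Set X)ᶜ) := dense_of_mem_residual h
  simpa using hd.nonempty

lemma singleton_meagre (y : X) : IsMeagre ({y} : Set X) := by
  refine meagre_of_closed_nwd isClosed_singleton ?_
  rw [eq_empty_iff_forall_notMem]
  intro z hz
  obtain ⟨m, hm⟩ := exists_cyl_subset isOpen_interior hz
  have h1 : z ∈ ({y} : Set X) := interior_subset hz
  rw [mem_singleton_iff] at h1
  subst h1
  set u : X := fun i => if i < m then z i else !z i with hu
  have hu1 : u ∈ cyl m z := fun i hi => by simp [hu, hi]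
  have h2 : u ∈ ({z} : Set X) := interior_subset (hm hu1)
  rw [mem_singleton_iff] at h2
  have h3 : u m = z m := by rw [h2]
  simp [hu] at h3

/-! ### The sets witnessing `add ≤ 𝔟` -/

/-- Points having a `true` in `[k, h k]` for all large `k`. -/
def Aset (h : ℕ → ℕ) : Set X :=
  {y | ∀ᶠ k in atTop, ∃ i, k ≤ i ∧ i ≤ h k ∧ y i = true}

lemma meager_Aset (h : ℕ → ℕ) : IsMeagre (Aset h) := by
  have hA : Aset h = ⋃ N, {y : X | ∀ k, N ≤ k → ∃ i, k ≤ i ∧ i ≤ h k ∧ y i = true} := by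
    ext y
    simp only [Aset, mem_setOf_eq, eventually_atTop, mem_iUnion]
  rw [hA]
  refine isMeagre_iUnion fun N => meagre_of_closed_nwd ?_ ?_
  · have heq : {y : X | ∀ k, N ≤ k → ∃ i, k ≤ i ∧ i ≤ h k ∧ y i = true}
        = ⋂ k, ⋂ (_ : N ≤ k), ⋃ i ∈ Finset.Icc k (h k), ((fun y : X => y i) ⁻¹' {true}) := by
      ext y
      simp only [mem_setOf_eq, mem_iInter, mem_iUnion, Finset.mem_Icc, mem_preimage,
        mem_singleton_iff]
      constructor
      · intro hy k hk
        obtain ⟨i, h1, h2, h3⟩ := hy k hk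
        exact ⟨i, ⟨h1, h2⟩, h3⟩
      · intro hy k hk
        obtain ⟨i, ⟨h1, h2⟩, h3⟩ := hy k hk
        exact ⟨i, h1, h2, h3⟩
    rw [heq]
    exact isClosed_iInter fun k => isClosed_iInter fun _ =>
      isClosed_biUnion_finset fun i _ =>
        IsClosed.preimage (continuous_apply i) (isClosed_discrete _)
  · rw [eq_empty_iff_forall_notMem]
    intro z hz
    obtain ⟨m, hm⟩ := exists_cyl_subset isOpen_interior hz
    set u : X := fun i => if i < m then z i else false with hu
    have hu1 : u ∈ cyl m z := fun i hi => by simp [hu, hi]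
    have hu2 := interior_subset (hm hu1)
    obtain ⟨i, h1, _, h3⟩ := hu2 (max N m) (le_max_left N m)
    have h4 : ¬ i < m := by
      have := le_trans (le_max_right N m) h1
      omega
    rw [hu] at h3
    simp [h4] at h3

lemma union_Aset_not_meagre {B : Set (ℕ → ℕ)}
    (hB : ¬ ∃ g : ℕ → ℕ, ∀ f ∈ B, ∀ᶠ n in atTop, f n ≤ g n) :
    ¬ IsMeagre (⋃ f ∈ B, Aset (maj f)) := by
  classical
  intro hmg
  obtain ⟨x, a, ha, hsub⟩ := exists_Mset hmg
  push_neg at hB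
  obtain ⟨f, hfB, hf⟩ := hB (fun n => a (n + 1))
  have hf : ∃ᶠ n in atTop, ¬ f n ≤ a (n + 1) := hf.mono fun n hn => not_le.mpr hn
  have hS : {n | a (n + 1) ≤ maj f (a n)}.Infinite := by
    refine Set.Infinite.mono ?_ (Nat.frequently_atTop_iff_infinite.mp hf)
    intro n hn
    simp only [mem_setOf_eq, not_le] at hn ⊢
    calc a (n + 1) ≤ f n := le_of_lt hn
    _ ≤ maj f n := le_maj f n
    _ ≤ maj f (a n) := maj_mono f ha.le_apply
  set σ : ℕ → ℕ := fun j => Nat.rec (hS.exists_gt 0).choose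
      (fun _ prev => (hS.exists_gt (prev + 1)).choose) j with hσ
  have hσmem0 : σ 0 ∈ {n | a (n + 1) ≤ maj f (a n)} ∧ 0 < σ 0 :=
    (hS.exists_gt 0).choose_spec
  have hσmemS : ∀ j, σ (j + 1) ∈ {n | a (n + 1) ≤ maj f (a n)} ∧ σ j + 1 < σ (j + 1) :=
    fun j => (hS.exists_gt (σ j + 1)).choose_spec
  have hσmem : ∀ j, a (σ j + 1) ≤ maj f (a (σ j)) := by
    intro j
    cases j with
    | zero => exact hσmem0.1
    | succ j => exact (hσmemS j).1
  have hσgap : ∀ j, σ j + 1 < σ (j + 1) := fun j => (hσmemS j).2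
  have hσsm : StrictMono σ := strictMono_nat_of_lt_succ fun j => by
    have := hσgap j; omega
  set y : X := fun i => if ∃ j, a (σ j) ≤ i ∧ i < a (σ j + 1) then x i else true with hy
  have hy1 : y ∈ Aset (maj f) := by
    rw [Aset, mem_setOf_eq, eventually_atTop]
    refine ⟨0, fun k _ => ?_⟩
    by_cases hk : ∃ j, a (σ j) ≤ k ∧ k < a (σ j + 1)
    · obtain ⟨j, hj1, hj2⟩ := hk
      refine ⟨a (σ j + 1), le_of_lt hj2, ?_, ?_⟩
      · exact le_trans (hσmem j) (maj_mono f hj1)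
      · rw [hy]
        simp only
        rw [if_neg]
        rintro ⟨j', h1, h2⟩
        have e1 : σ j' ≤ σ j + 1 := by
          by_contra hcon
          have k1 : a (σ j + 1) < a (σ j') := ha (by omega)
          omega
        have e2 : σ j + 1 < σ j' + 1 := by
          have := ha.lt_iff_lt.mp h2
          omega
        have e3 : σ j' = σ j + 1 := by omega
        rcases lt_trichotomy j' j with hlt | heq | hgt
        · have := hσsm hlt; omega
        · subst heq; omega
        · have h5 : σ (j + 1) ≤ σ j' := hσsm.monotone hgt
          have := hσgap j
          omega
    · refine ⟨k, le_refl k, id_le_maj f k, ?_⟩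
      rw [hy]
      simp only
      rw [if_neg hk]
  have hy2 : y ∉ Mset x a := by
    rw [Mset, mem_setOf_eq, eventually_atTop]
    rintro ⟨N, hN⟩
    refine hN (σ N) (le_trans hσsm.le_apply (le_refl _)) ?_
    intro i h1 h2
    rw [hy]
    simp only
    rw [if_pos ⟨N, h1, h2⟩]
  exact hy2 (hsub (mem_biUnion hfB hy1))

/-! ### The hard direction: small unions of meager sets are meager -/

lemma union_meagre_of_small {F : Set (Set X)} (hmeag : ∀ A ∈ F, IsMeagre A)
    (hcov : #F < covMeager) (hb : #F < boundingNumber) : IsMeagre (⋃₀ F) := by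
  classical
  have h1 : ∀ A : Set X, A ∈ F → ∃ x aa, StrictMono aa ∧ A ⊆ Mset x aa :=
    fun A hA => exists_Mset (hmeag A hA)
  choose! xA aA hmono hsubA using h1
  -- Step 2: a common interval partition absorbing all the `aA`, using `#F < 𝔟`
  obtain ⟨g, hg⟩ := exists_dominating (F := F) (fun A k => aA A (k + 1)) hb
  set a : ℕ → ℕ := blocks g with haeq
  have hasm : StrictMono a := blocks_strictMono g
  have hstep2 : ∀ A ∈ F, ∀ᶠ n in atTop,
      ∃ m, a n ≤ aA A m ∧ aA A (m + 1) ≤ a (n + 1) := by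
    intro A hA
    obtain ⟨k₀, hk₀⟩ := eventually_atTop.mp (hg A hA)
    rw [eventually_atTop]
    refine ⟨k₀, fun n hn => ?_⟩
    have han : k₀ ≤ a n := le_trans hn hasm.le_apply
    have hex : ∃ m, a n ≤ aA A m := ⟨a n, (hmono A hA).le_apply⟩
    have hm1 : a n ≤ aA A (Nat.find hex) := Nat.find_spec hex
    have hm2 : Nat.find hex ≤ a n := Nat.find_min' hex ((hmono A hA).le_apply)
    have hm3 : aA A (Nat.find hex + 1) ≤ aA A (a n + 1) :=
      (hmono A hA).monotone (by omega)
    have hm4 : aA A (a n + 1) ≤ g (a n) := hk₀ (a n) han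
    have hm5 : g (a n) < a (n + 1) := lt_blocks_succ g n
    exact ⟨Nat.find hex, hm1, by omega⟩
  -- Step 3: each member of `F` lies in an `Mset` along the common partition
  have hstep3 : ∀ A ∈ F, A ⊆ Mset (xA A) a := by
    intro A hA y hy
    have hyM := hsubA A hA hy
    rw [Mset, mem_setOf_eq, eventually_atTop] at hyM ⊢
    obtain ⟨M₀, hM₀⟩ := hyM
    obtain ⟨N₀, hN₀⟩ := eventually_atTop.mp (hstep2 A hA)
    refine ⟨max N₀ (aA A M₀ + 1), fun n hn hagree => ?_⟩
    obtain ⟨m, hi1, hi2⟩ := hN₀ n (le_trans (le_max_left _ _) hn)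
    have hn2 : aA A M₀ + 1 ≤ n := le_trans (le_max_right _ _) hn
    have hmM : M₀ ≤ m := by
      by_contra hcon
      have hc1 : aA A m < aA A M₀ := (hmono A hA) (by omega)
      have hc2 : n ≤ a n := hasm.le_apply
      omega
    exact hM₀ m hmM fun i hj1 hj2 =>
      hagree i (le_trans hi1 hj1) (lt_of_lt_of_le hj2 hi2)
  -- Step 4: a single point `d` matching every pattern infinitely often,
  -- using `#F < cov`
  obtain ⟨d, hd⟩ := exists_avoid (F := F) (fun A => Mset (xA A) a)
      (fun A hA => meager_Mset hasm) hcov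
  have hdS : ∀ A ∈ F, {n | agreeOn d (xA A) (a n) (a (n + 1))}.Infinite := by
    intro A hA
    have hdd := hd A hA
    rw [Mset, mem_setOf_eq, Filter.not_eventually] at hdd
    exact Nat.frequently_atTop_iff_infinite.mp (hdd.mono fun n hn => not_not.mp hn)
  -- Step 5: grouping into blocks meeting every matching set, using `#F < 𝔟`
  obtain ⟨h', hh'⟩ := exists_dominating (F := F)
      (fun A => Nat.nth (fun n => agreeOn d (xA A) (a n) (a (n + 1)))) hb
  set b' : ℕ → ℕ := blocks h' with hb'eq
  have hb'sm : StrictMono b' := blocks_strictMono h'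
  have hstep5 : ∀ A ∈ F, ∀ᶠ m in atTop,
      ∃ n, b' m ≤ n ∧ n < b' (m + 1) ∧ agreeOn d (xA A) (a n) (a (n + 1)) := by
    intro A hA
    obtain ⟨k₁, hk₁⟩ := eventually_atTop.mp (hh' A hA)
    rw [eventually_atTop]
    refine ⟨k₁, fun m hm => ?_⟩
    have hbm : k₁ ≤ b' m := le_trans hm hb'sm.le_apply
    have hinf : (setOf (fun n => agreeOn d (xA A) (a n) (a (n + 1)))).Infinite := hdS A hA
    refine ⟨Nat.nth _ (b' m), (Nat.nth_strictMono hinf).le_apply, ?_,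
      Nat.nth_mem_of_infinite hinf _⟩
    calc Nat.nth _ (b' m) ≤ h' (b' m) := hk₁ (b' m) hbm
    _ < b' (m + 1) := lt_blocks_succ h' m
  -- Step 6: the union is contained in a single `Mset`
  have hfinal : ⋃₀ F ⊆ Mset d (fun m => a (b' m)) := by
    rintro y ⟨A, hA, hyA⟩
    have hy3 := hstep3 A hA hyA
    rw [Mset, mem_setOf_eq, eventually_atTop] at hy3 ⊢
    obtain ⟨N₁, hN₁⟩ := hy3
    obtain ⟨N₂, hN₂⟩ := eventually_atTop.mp (hstep5 A hA)
    refine ⟨max N₁ N₂, fun m hm hagree => ?_⟩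
    obtain ⟨n, hn1, hn2, hn3⟩ := hN₂ m (le_trans (le_max_right _ _) hm)
    have hmN₁ : N₁ ≤ n :=
      le_trans (le_trans (le_max_left _ _) hm) (le_trans hb'sm.le_apply hn1)
    refine hN₁ n hmN₁ ?_
    intro i hj1 hj2
    have hiL : a (b' m) ≤ i := le_trans (hasm.monotone hn1) hj1
    have hiR : i < a (b' (m + 1)) :=
      lt_of_lt_of_le hj2 (hasm.monotone (by omega : n + 1 ≤ b' (m + 1)))
    rw [hagree i hiL hiR]
    exact hn3 i hj1 hj2
  exact (meager_Mset (hasm.comp hb'sm)).mono hfinal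

/-! ### Nonemptiness of the defining sets -/

lemma covSet_mem : ∃ F : Set (Set (ℕ → Bool)),
    (∀ A ∈ F, IsMeagre A) ∧ ⋃₀ F = Set.univ ∧
      #(range fun y : X => ({y} : Set X)) = #F := by
  refine ⟨range fun y : X => ({y} : Set X), ?_, ?_, rfl⟩
  · rintro A ⟨y, rfl⟩
    exact singleton_meagre y
  · rw [eq_univ_iff_forall]
    intro y
    exact ⟨{y}, ⟨y, rfl⟩, rfl⟩

lemma covSet_nonempty : { c | ∃ F : Set (Set (ℕ → Bool)),
    (∀ A ∈ F, IsMeagre A) ∧ ⋃₀ F = Set.univ ∧ c = #F }.Nonempty := by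
  obtain ⟨F, h1, h2, h3⟩ := covSet_mem
  exact ⟨#F, F, h1, h2, rfl⟩

lemma covSet_sub_addSet : { c | ∃ F : Set (Set (ℕ → Bool)),
      (∀ A ∈ F, IsMeagre A) ∧ ⋃₀ F = Set.univ ∧ c = #F }
    ⊆ { c | ∃ F : Set (Set (ℕ → Bool)),
      (∀ A ∈ F, IsMeagre A) ∧ ¬ IsMeagre (⋃₀ F) ∧ c = #F } := by
  rintro c ⟨F, h1, h2, h3⟩
  exact ⟨F, h1, h2 ▸ univ_not_meagre, h3⟩

lemma addSet_nonempty : { c | ∃ F : Set (Set (ℕ → Bool)),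
    (∀ A ∈ F, IsMeagre A) ∧ ¬ IsMeagre (⋃₀ F) ∧ c = #F }.Nonempty :=
  covSet_nonempty.mono covSet_sub_addSet

lemma boundingSet_nonempty : { c | ∃ B : Set (ℕ → ℕ),
    (¬ ∃ g : ℕ → ℕ, ∀ f ∈ B, ∀ᶠ n in Filter.atTop, f n ≤ g n) ∧ c = #B }.Nonempty := by
  refine ⟨#(Set.univ : Set (ℕ → ℕ)), Set.univ, ?_, rfl⟩
  rintro ⟨g, hg⟩
  obtain ⟨N, hN⟩ := eventually_atTop.mp (hg (fun n => g n + 1) (mem_univ _))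
  have := hN N (le_refl N)
  omega

/-! ### The three inequalities -/

lemma add_le_cov : addMeager ≤ covMeager := by
  have h1 : covMeager ∈ { c | ∃ F : Set (Set (ℕ → Bool)),
      (∀ A ∈ F, IsMeagre A) ∧ ⋃₀ F = Set.univ ∧ c = #F } :=
    csInf_mem covSet_nonempty
  exact csInf_le (OrderBot.bddBelow _) (covSet_sub_addSet h1)

lemma add_le_bounding : addMeager ≤ boundingNumber := by
  have h1 : boundingNumber ∈ { c | ∃ B : Set (ℕ → ℕ),
      (¬ ∃ g : ℕ → ℕ, ∀ f ∈ B, ∀ᶠ n in Filter.atTop, f n ≤ g n) ∧ c = #B } :=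
    csInf_mem boundingSet_nonempty
  obtain ⟨B, hBunb, hBcard⟩ := h1
  have h2 : addMeager ≤ #((fun f => Aset (maj f)) '' B) := by
    refine csInf_le (OrderBot.bddBelow _) ⟨(fun f => Aset (maj f)) '' B, ?_, ?_, rfl⟩
    · rintro A ⟨f, hf, rfl⟩
      exact meager_Aset (maj f)
    · rw [Set.sUnion_image]
      exact union_Aset_not_meagre hBunb
  exact h2.trans (Cardinal.mk_image_le.trans_eq hBcard.symm)

lemma min_le_add : min covMeager boundingNumber ≤ addMeager := by
  refine le_csInf addSet_nonempty ?_
  rintro c ⟨F, hmeag, hnm, rfl⟩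
  by_contra hlt
  push_neg at hlt
  rw [lt_min_iff] at hlt
  exact hnm (union_meagre_of_small hmeag hlt.1 hlt.2)

end CantorAdd

/-- add(meager) = min(cov(meager), 𝔟); in particular
min(cov(meager), 𝔟) ≤ add(meager). -/
theorem stmt12 : addMeager = min covMeager boundingNumber ∧
    min covMeager boundingNumber ≤ addMeager :=
  ⟨le_antisymm (le_min CantorAdd.add_le_cov CantorAdd.add_le_bounding)
    CantorAdd.min_le_add, CantorAdd.min_le_add⟩
end

section
/- Let κ < min(cov(meager), 𝔟) and let (x_α, Π_α), α < κ, be chopped reals. Then there is a single chopped real (y, Θ) that engulfs every (x_α, Π_α). -/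
open Cardinal

/-- The agreement-on-the-`n`-th-interval set is open. -/
lemma agreeSet_isOpen (x : ℕ → Bool) (a : ℕ → ℕ) (n : ℕ) :
    IsOpen {y : ℕ → Bool | ∀ j ∈ Set.Ico (a n) (a (n + 1)), y j = x j} := by
  have : {y : ℕ → Bool | ∀ j ∈ Set.Ico (a n) (a (n + 1)), y j = x j}
      = ⋂ j ∈ Set.Ico (a n) (a (n + 1)), {y : ℕ → Bool | y j = x j} := by
    ext y; simp
  rw [this]
  refine (Set.finite_Ico _ _).isOpen_biInter fun j _ => ?_
  have hco : Continuous (fun y : ℕ → Bool => y j) := continuous_apply j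
  exact hco.isOpen_preimage ({x j} : Set Bool) (isOpen_discrete _)

/-- `MatchSet` is comeager. -/
lemma matchSet_residual (x : ℕ → Bool) (a : ℕ → ℕ) (ha : IntervalPartition a) :
    MatchSet x a ∈ residual (ℕ → Bool) := by
  set A : ℕ → Set (ℕ → Bool) :=
    fun n => {y | ∀ j ∈ Set.Ico (a n) (a (n + 1)), y j = x j} with hA
  set U : ℕ → Set (ℕ → Bool) := fun N => ⋃ n, ⋃ _ : N ≤ n, A n with hU
  rw [mem_residual_iff]
  refine ⟨Set.range U, ?_, ?_, Set.countable_range U, ?_⟩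
  · rintro t ⟨N, rfl⟩
    exact isOpen_iUnion fun n => isOpen_iUnion fun _ => agreeSet_isOpen x a n
  · rintro t ⟨N, rfl⟩
    rw [dense_iff_inter_open]
    rintro V hV ⟨v, hv⟩
    obtain ⟨I, u, hu, hsub⟩ := isOpen_pi_iff.1 hV v hv
    set M : ℕ := I.sup id with hM
    set n : ℕ := max N (M + 1) with hn
    have hjn : ∀ j ∈ I, j < a n := by
      intro j hj
      have h1 : j ≤ M := Finset.le_sup (f := id) hj
      have h2 : n ≤ a n := ha.2.le_apply
      have h3 : M + 1 ≤ n := le_max_right _ _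
      omega
    refine ⟨fun j => if a n ≤ j ∧ j < a (n + 1) then x j else v j, ?_, ?_⟩
    · apply hsub
      intro j hj
      have hlt := hjn j hj
      show (if a n ≤ j ∧ j < a (n + 1) then x j else v j) ∈ u j
      rw [if_neg (by omega)]
      exact (hu j hj).2
    · refine Set.mem_iUnion.2 ⟨n, Set.mem_iUnion.2 ⟨le_max_left _ _, ?_⟩⟩
      intro j hj
      simp only [Set.mem_Ico] at hj
      simp [hj.1, hj.2]
  · intro y hy
    have h : ∀ N, ∃ n, N ≤ n ∧ y ∈ A n := by
      intro N
      have := hy (U N) ⟨N, rfl⟩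
      simpa [hU] using this
    refine Set.infinite_of_forall_exists_gt ?_
    intro N
    obtain ⟨n, hn1, hn2⟩ := h (N + 1)
    exact ⟨n, hn2, by omega⟩

/-- If `κ < min(cov(meager), 𝔟)` and `(x i, P i)`, `i : ι`, are `κ` many chopped
reals, then some single chopped real `(y, Θ)` engulfs them all. -/
theorem stmt13 (ι : Type) (hκ : #ι < min covMeager boundingNumber)
    (x : ι → ℕ → Bool) (P : ι → ℕ → ℕ) (hP : ∀ i, IntervalPartition (P i)) :
    ∃ (y : ℕ → Bool) (Θ : ℕ → ℕ), IntervalPartition Θ ∧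
      ∀ i, Engulfs y Θ (x i) (P i) := by
  have hκc : #ι < covMeager := lt_of_lt_of_le hκ (min_le_left _ _)
  have hκb : #ι < boundingNumber := lt_of_lt_of_le hκ (min_le_right _ _)
  -- Step 1: a single real `y` matching all the chopped reals.
  have hy : ∃ y : ℕ → Bool, ∀ i, Matches y (x i) (P i) := by
    by_contra h
    push_neg at h
    have hcov : covMeager ≤ #(Set.range fun i => (MatchSet (x i) (P i))ᶜ) := by
      refine csInf_le' ⟨Set.range fun i => (MatchSet (x i) (P i))ᶜ, ?_, ?_, rfl⟩
      · rintro A ⟨i, rfl⟩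
        rw [IsMeagre, compl_compl]
        exact matchSet_residual (x i) (P i) (hP i)
      · ext y
        simp only [Set.mem_sUnion, Set.mem_univ, iff_true]
        obtain ⟨i, hi⟩ := h y
        exact ⟨(MatchSet (x i) (P i))ᶜ, ⟨i, rfl⟩, hi⟩
    exact absurd (hcov.trans Cardinal.mk_range_le) (not_le.2 hκc)
  obtain ⟨y, hy⟩ := hy
  -- Step 2: for each `i` and `n`, an agreement interval of `P i` beyond `n`.
  have key : ∀ i n, ∃ fv : ℕ, ∃ m : ℕ, n ≤ P i m ∧ P i (m + 1) ≤ fv ∧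
      ∀ j ∈ Set.Ico (P i m) (P i (m + 1)), y j = x i j := by
    intro i n
    obtain ⟨m, hm, hnm⟩ := (hy i).exists_gt n
    exact ⟨P i (m + 1), m, le_of_lt (lt_of_lt_of_le hnm (hP i).2.le_apply),
      le_refl _, hm⟩
  choose f hf using key
  -- Step 3: dominate all the `f i` by a single `g`.
  have hg : ∃ g : ℕ → ℕ, ∀ i, ∀ᶠ n in Filter.atTop, f i n ≤ g n := by
    by_contra h
    push_neg at h
    have hb : boundingNumber ≤ #(Set.range f) := by
      refine csInf_le' ⟨Set.range f, ?_, rfl⟩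
      rintro ⟨g, hg⟩
      obtain ⟨i, hi⟩ := h g
      exact hi ((hg (f i) ⟨i, rfl⟩).mono fun n hn => not_lt.2 hn)
    exact absurd (hb.trans Cardinal.mk_range_le) (not_le.2 hκb)
  obtain ⟨g, hg⟩ := hg
  -- Step 4: build the coarse partition Θ by iterating g.
  let c : ℕ → ℕ := fun n => Nat.rec 0 (fun _ cn => max (cn + 1) (g cn)) n
  have hc0 : c 0 = 0 := rfl
  have hcs : ∀ n, c (n + 1) = max (c n + 1) (g (c n)) := fun n => rfl
  have hcmono : StrictMono c := by
    apply strictMono_nat_of_lt_succ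
    intro n
    rw [hcs]
    exact lt_of_lt_of_le (Nat.lt_succ_self _) (le_max_left _ _)
  refine ⟨y, c, ⟨hc0, hcmono⟩, ?_⟩
  intro i
  obtain ⟨N, hN⟩ := Filter.eventually_atTop.1 (hg i)
  refine Set.Finite.subset (Set.finite_Iio N) ?_
  intro n hn
  simp only [Set.mem_setOf_eq] at hn
  rw [Set.mem_Iio]
  by_contra hlt
  push_neg at hlt
  have hcn : N ≤ c n := le_trans hlt hcmono.le_apply
  obtain ⟨m, hm1, hm2, hm3⟩ := hf i (c n)
  refine hn ⟨m, ?_, hm3⟩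
  refine Set.Ico_subset_Ico hm1 ?_
  calc P i (m + 1) ≤ f i (c n) := hm2
    _ ≤ g (c n) := hN (c n) hcn
    _ ≤ c (n + 1) := by rw [hcs]; exact le_max_right _ _
end

section
/- Suppose y : ℕ → 2 matches every chopped real (x_α, Π_α) for α < κ, and suppose g : ℕ → ℕ eventually majorizes each function f_α, where f_α(n) is the right endpoint of the next interval of Π_α after the one containing n on which y agrees with x_α. Choose a partition Θ of ℕ into consecutive finite intervals such that for each interval, g of its left endpoint is less than its right endpoint. Then (y, Θ) engulfs every (x_α, Π_α). -/
open Filter in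
theorem engulfs_iff_eventually {x : ℕ → Bool} {a : ℕ → ℕ} {x' : ℕ → Bool} {a' : ℕ → ℕ} :
    Engulfs x a x' a' ↔ ∀ᶠ n in atTop, ∃ m : ℕ,
      Set.Ico (a' m) (a' (m + 1)) ⊆ Set.Ico (a n) (a (n + 1)) ∧
        ∀ i ∈ Set.Ico (a' m) (a' (m + 1)), x i = x' i := by
  rw [← Nat.cofinite_eq_atTop, eventually_cofinite, Engulfs]

theorem stmt14_general {ι : Type} (x : ι → ℕ → Bool) (P : ι → ℕ → ℕ)
    (y : ℕ → Bool)
    (f : ι → ℕ → ℕ)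
    (hf : ∀ i n, ∃ m : ℕ, n < P i m ∧
      (∀ j ∈ Set.Ico (P i m) (P i (m + 1)), y j = x i j) ∧
      f i n = P i (m + 1) ∧
      ∀ m' : ℕ, n < P i m' →
        (∀ j ∈ Set.Ico (P i m') (P i (m' + 1)), y j = x i j) → m ≤ m')
    (g : ℕ → ℕ) (hg : ∀ i, ∀ᶠ n in Filter.atTop, f i n ≤ g n)
    (Θ : ℕ → ℕ) (hΘ : IntervalPartition Θ)
    (hΘg : ∀ k, g (Θ k) < Θ (k + 1)) :
    ∀ i, Engulfs y Θ (x i) (P i) := by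
  intro i
  rw [engulfs_iff_eventually]
  filter_upwards [hΘ.2.tendsto_atTop.eventually (hg i)] with k hfg
  -- the first agreeing interval of `P i` after `Θ k` ends at `f i (Θ k) ≤ g (Θ k) < Θ (k + 1)`
  obtain ⟨m, hstart, hagree, hend, -⟩ := hf i (Θ k)
  exact ⟨m, Set.Ico_subset_Ico hstart.le (hend ▸ hfg.trans (hΘg k).le), hagree⟩

/-- Suppose `y` matches every chopped real `(x i, P i)`, `f i n` is the right
endpoint of the next interval of `P i` after the one containing `n` on which
`y` agrees with `x i`, `g` eventually majorizes every `f i`, and `Θ` is a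
partition such that `g` of the left endpoint of each interval is less than its
right endpoint.  Then `(y, Θ)` engulfs every `(x i, P i)`. -/
theorem stmt14 {ι : Type} (x : ι → ℕ → Bool) (P : ι → ℕ → ℕ)
    (hP : ∀ i, IntervalPartition (P i))
    (y : ℕ → Bool) (hmatch : ∀ i, Matches y (x i) (P i))
    (f : ι → ℕ → ℕ)
    (hf : ∀ i n, ∃ m : ℕ, n < P i m ∧
      (∀ j ∈ Set.Ico (P i m) (P i (m + 1)), y j = x i j) ∧
      f i n = P i (m + 1) ∧
      ∀ m' : ℕ, n < P i m' →
        (∀ j ∈ Set.Ico (P i m') (P i (m' + 1)), y j = x i j) → m ≤ m')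
    (g : ℕ → ℕ) (hg : ∀ i, ∀ᶠ n in Filter.atTop, f i n ≤ g n)
    (Θ : ℕ → ℕ) (hΘ : IntervalPartition Θ)
    (hΘg : ∀ k, g (Θ k) < Θ (k + 1)) :
    ∀ i, Engulfs y Θ (x i) (P i) :=
  stmt14_general x P y f hf g hg Θ hΘ hΘg
end

section
/- For relation triples A and B, the dual norm of the sequential composition equals the minimum of the dual norms: ‖(A;B)^⊥‖ = min(‖A^⊥‖, ‖B^⊥‖). -/
open Cardinal

universe u

/-- The norm of a relation triple `(α, β, A)`: the least cardinality of a set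
`Z ⊆ β` such that every `x : α` is `A`-related to some member of `Z`. -/
noncomputable def rnorm {α β : Type u} (A : α → β → Prop) : Cardinal.{u} :=
  sInf { c | ∃ Z : Set β, (∀ x : α, ∃ z ∈ Z, A x z) ∧ c = #Z }

/-- The dual relation: `A^⊥ = (A₊, A₋, {(z,x) : ¬ A(x,z)})`. -/
def dualRel {α β : Type u} (A : α → β → Prop) : β → α → Prop :=
  fun z x => ¬ A x z

/-- The relation part of the sequential composition `A;B`, with minus part
`α × (β → γ)` and plus part `β × δ`. -/
def seqComp {α β γ δ : Type u} (A : α → β → Prop) (B : γ → δ → Prop) :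
    α × (β → γ) → β × δ → Prop :=
  fun p q => A p.1 q.1 ∧ B (p.2 q.1) q.2

lemma rnorm_le_mk {α β : Type u} (R : α → β → Prop) (Z : Set β)
    (h : ∀ x, ∃ z ∈ Z, R x z) : rnorm R ≤ #Z :=
  csInf_le' ⟨Z, h, rfl⟩

/-- `‖(A;B)^⊥‖ = min(‖A^⊥‖, ‖B^⊥‖)`. -/
theorem stmt15 {α β γ δ : Type u} (A : α → β → Prop) (B : γ → δ → Prop)
    (hA₁ : ∀ x : α, ∃ y : β, A x y) (hA₂ : ¬ ∃ y : β, ∀ x : α, A x y)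
    (hB₁ : ∀ x : γ, ∃ y : δ, B x y) (hB₂ : ¬ ∃ y : δ, ∀ x : γ, B x y) :
    rnorm (dualRel (seqComp A B)) = min (rnorm (dualRel A)) (rnorm (dualRel B)) := by
  push_neg at hA₂ hB₂
  by_cases hβ : Nonempty β
  swap
  · -- β empty: both sides 0
    have h1 : rnorm (dualRel (seqComp A B)) = 0 := by
      refine le_antisymm ?_ zero_le
      have := rnorm_le_mk (dualRel (seqComp A B)) ∅
        (fun x => absurd ⟨x.1⟩ hβ)
      simpa using this
    have h2 : rnorm (dualRel A) = 0 := by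
      refine le_antisymm ?_ zero_le
      have := rnorm_le_mk (dualRel A) ∅ (fun x => absurd ⟨x⟩ hβ)
      simpa using this
    simp [h1, h2]
  by_cases hδ : Nonempty δ
  swap
  · have h1 : rnorm (dualRel (seqComp A B)) = 0 := by
      refine le_antisymm ?_ zero_le
      have := rnorm_le_mk (dualRel (seqComp A B)) ∅
        (fun x => absurd ⟨x.2⟩ hδ)
      simpa using this
    have h2 : rnorm (dualRel B) = 0 := by
      refine le_antisymm ?_ zero_le
      have := rnorm_le_mk (dualRel B) ∅ (fun x => absurd ⟨x⟩ hδ)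
      simpa using this
    simp [h1, h2]
  -- main case
  have hα : Nonempty α := by
    obtain ⟨u⟩ := hβ; obtain ⟨a, _⟩ := hA₂ u; exact ⟨a⟩
  have hγ : Nonempty γ := by
    obtain ⟨w⟩ := hδ; obtain ⟨c, _⟩ := hB₂ w; exact ⟨c⟩
  refine le_antisymm (le_min ?_ ?_) ?_
  · -- ≤ ‖A^⊥‖
    refine le_csInf ⟨#(Set.univ : Set α), Set.univ, fun u => ?_, rfl⟩ ?_
    · obtain ⟨a, ha⟩ := hA₂ u; exact ⟨a, trivial, ha⟩
    rintro c ⟨Z, hZ, rfl⟩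
    refine le_trans (rnorm_le_mk _
      ((fun a => (a, fun _ => Classical.arbitrary γ)) '' Z) ?_) (mk_image_le)
    rintro ⟨u, w⟩
    obtain ⟨a, haZ, ha⟩ := hZ u
    exact ⟨_, Set.mem_image_of_mem _ haZ, fun h => ha h.1⟩
  · -- ≤ ‖B^⊥‖
    refine le_csInf ⟨#(Set.univ : Set γ), Set.univ, fun w => ?_, rfl⟩ ?_
    · obtain ⟨c, hc⟩ := hB₂ w; exact ⟨c, trivial, hc⟩
    rintro c ⟨Z, hZ, rfl⟩
    refine le_trans (rnorm_le_mk _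
      ((fun g => (Classical.arbitrary α, fun _ => g)) '' Z) ?_) (mk_image_le)
    rintro ⟨u, w⟩
    obtain ⟨g, hgZ, hg⟩ := hZ w
    exact ⟨_, Set.mem_image_of_mem _ hgZ, fun h => hg h.2⟩
  · -- min ≤ LHS
    refine le_csInf ⟨#(Set.univ : Set (α × (β → γ))), Set.univ, fun q => ?_, rfl⟩ ?_
    · obtain ⟨a, ha⟩ := hA₂ q.1
      exact ⟨(a, fun _ => Classical.arbitrary γ), trivial, fun h => ha h.1⟩
    rintro c ⟨Z, hZ, rfl⟩
    by_cases h : ∀ u : β, ∃ p ∈ Z, ¬ A p.1 u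
    · refine le_trans (min_le_left _ _) ?_
      refine le_trans (rnorm_le_mk _ (Prod.fst '' Z) ?_) (mk_image_le)
      intro u
      obtain ⟨p, hpZ, hp⟩ := h u
      exact ⟨p.1, Set.mem_image_of_mem _ hpZ, hp⟩
    · push_neg at h
      obtain ⟨u₀, hu₀⟩ := h
      refine le_trans (min_le_right _ _) ?_
      refine le_trans (rnorm_le_mk _ ((fun p => p.2 u₀) '' Z) ?_) (mk_image_le)
      intro w
      obtain ⟨p, hpZ, hp⟩ := hZ (u₀, w)
      exact ⟨p.2 u₀, Set.mem_image_of_mem _ hpZ, fun hb => hp ⟨hu₀ p hpZ, hb⟩⟩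
end
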